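/- arXiv:1807.08489 — 2 statements merged into one kernel-verified Lean document; each statement's English description precedes it below -/
import Mathlib

section
/- Let (X₁,Y₁) and (X₂,Y₂) be random vectors taking values in the unit square [0,1]×[0,1], with cdfs F₁ and F₂. If F₁(s,t) ≤ F₂(s,t) for all (s,t) ∈ [0,1]×[0,1], then for every function φ : ℝ² → ℝ which is C² on an open connected set Ω containing [0,1]×[0,1], increasing (nondecreasing) in each of its arguments, and submodular (∂²φ/∂x∂y ≤ 0 on Ω), one has E[φ(X₁,Y₁)] ≥ E[φ(X₂,Y₂)]. -/
/-!
For `f` of class `C²` near the rectangle `[a, b] × [c, d]` and `(x, y)` in it, the fundamental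
theorem of calculus, applied three times, gives
`f(x, y) = f(b, d) - ∫ₓᵇ ∂₁f(s, d) ds - ∫ᵧᵈ ∂₂f(b, t) dt + ∫ᵧᵈ ∫ₓᵇ ∂₁∂₂f(s, t) ds dt`.
Every integral runs over the points above `(x, y)`, so for a random vector `X` in the rectangle
Fubini's theorem turns `E f(X)` into integrals of the partial derivatives against the cdf `F_X`:
`E f(X) = f(b, d) - ∫ ∂₁f(s, d) F_X(s, d) ds - ∫ ∂₂f(b, t) F_X(b, t) dt + ∬ ∂₁∂₂f F_X`.
When `F_X ≤ F_Y`, `∂₁f, ∂₂f ≥ 0` and `∂₁∂₂f ≤ 0`, each term compares in the same direction.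
-/

open Set MeasureTheory

section CdfFubini

variable {α β : Type*} [MeasurableSpace β] [TopologicalSpace β] [PartialOrder β]
  [OrderClosedTopology β] [OpensMeasurableSpace β] {ν : Measure β} {X : α → β} {c : β → ℝ}

lemma setIntegral_Ici_eq_integral_indicator (ω : α) :
    ∫ q in Ici (X ω), c q ∂ν = ∫ q, {p : α × β | X p.1 ≤ p.2}.indicator (c ·.2) (ω, q) ∂ν := by
  rw [← integral_indicator measurableSet_Ici]
  rfl

variable [MeasurableSpace α] [SecondCountableTopology β] {ℙ : Measure α}

lemma integral_indicator_le_comp_snd (hX : Measurable X) (q : β) :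
    ∫ ω, {p : α × β | X p.1 ≤ p.2}.indicator (c ·.2) (ω, q) ∂ℙ
      = c q * ℙ.real {ω | X ω ≤ q} := by
  rw [← mul_comm, ← smul_eq_mul,
    ← integral_indicator_const _ (measurableSet_le hX measurable_const)]
  rfl

variable [IsFiniteMeasure ℙ] [SFinite ν]

lemma integrable_indicator_le_comp_snd (hX : Measurable X) (hc : Integrable c ν) :
    Integrable ({p : α × β | X p.1 ≤ p.2}.indicator (c ·.2)) (ℙ.prod ν) :=
  (hc.comp_snd ℙ).indicator (measurableSet_le (hX.comp measurable_fst) measurable_snd)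

lemma integrable_setIntegral_Ici (hX : Measurable X) (hc : Integrable c ν) :
    Integrable (fun ω => ∫ q in Ici (X ω), c q ∂ν) ℙ := by
  simpa only [setIntegral_Ici_eq_integral_indicator] using
    (integrable_indicator_le_comp_snd (ℙ := ℙ) hX hc).integral_prod_left

lemma integrable_mul_measureReal_le (hX : Measurable X) (hc : Integrable c ν) :
    Integrable (fun q => c q * ℙ.real {ω | X ω ≤ q}) ν := by
  simpa only [integral_indicator_le_comp_snd hX] using
    (integrable_indicator_le_comp_snd (ℙ := ℙ) hX hc).integral_prod_right

theorem integral_setIntegral_Ici (hX : Measurable X) (hc : Integrable c ν) :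
    ∫ ω, ∫ q in Ici (X ω), c q ∂ν ∂ℙ = ∫ q, c q * ℙ.real {ω | X ω ≤ q} ∂ν := by
  simp only [setIntegral_Ici_eq_integral_indicator, ← integral_indicator_le_comp_snd hX]
  exact integral_integral_swap (integrable_indicator_le_comp_snd hX hc)

end CdfFubini

noncomputable def partialFst (f : ℝ × ℝ → ℝ) (p : ℝ × ℝ) : ℝ := fderiv ℝ f p (1, 0)

noncomputable def partialSnd (f : ℝ × ℝ → ℝ) (p : ℝ × ℝ) : ℝ := fderiv ℝ f p (0, 1)

section Partials

variable {f : ℝ × ℝ → ℝ} {U : Set (ℝ × ℝ)} {x y : ℝ}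

lemma hasDerivAt_partialFst (hf : DifferentiableAt ℝ f (x, y)) :
    HasDerivAt (fun x' => f (x', y)) (partialFst f (x, y)) x :=
  hf.hasFDerivAt.comp_hasDerivAt x ((hasDerivAt_id x).prodMk (hasDerivAt_const x y))

lemma hasDerivAt_partialSnd (hf : DifferentiableAt ℝ f (x, y)) :
    HasDerivAt (fun y' => f (x, y')) (partialSnd f (x, y)) y :=
  hf.hasFDerivAt.comp_hasDerivAt y ((hasDerivAt_const y x).prodMk (hasDerivAt_id y))

lemma deriv_deriv_eq_partialFst_partialSnd (hU : IsOpen U)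
    (hf : DifferentiableOn ℝ f U) {p : ℝ × ℝ} (hp : p ∈ U)
    (hd : DifferentiableAt ℝ (partialSnd f) p) :
    deriv (fun x => deriv (fun y => f (x, y)) p.2) p.1 = partialFst (partialSnd f) p := by
  have hpartial : (fun x => deriv (fun y => f (x, y)) p.2) =ᶠ[nhds p.1]
      fun x => partialSnd f (x, p.2) := by
    filter_upwards [(hU.preimage (Continuous.prodMk_left p.2)).mem_nhds hp] with x hx
    exact (hasDerivAt_partialSnd (hf.differentiableAt (hU.mem_nhds hx))).deriv
  rw [hpartial.deriv_eq]
  exact (hasDerivAt_partialFst hd).deriv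

variable {m n : WithTop ℕ∞}

lemma ContDiffOn.partialFst_of_isOpen (hf : ContDiffOn ℝ n f U) (hU : IsOpen U)
    (hmn : m + 1 ≤ n) :
    ContDiffOn ℝ m (partialFst f) U :=
  (hf.fderiv_of_isOpen hU hmn).clm_apply contDiffOn_const

lemma ContDiffOn.partialSnd_of_isOpen (hf : ContDiffOn ℝ n f U) (hU : IsOpen U)
    (hmn : m + 1 ≤ n) :
    ContDiffOn ℝ m (partialSnd f) U :=
  (hf.fderiv_of_isOpen hU hmn).clm_apply contDiffOn_const

lemma ContDiffOn.continuousOn_partialFst_partialSnd (hf : ContDiffOn ℝ 2 f U) (hU : IsOpen U) :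
    ContinuousOn (partialFst (partialSnd f)) U :=
  ((hf.partialSnd_of_isOpen hU (by norm_num : (1 : WithTop ℕ∞) + 1 ≤ 2)).partialFst_of_isOpen
    hU (zero_add _).le).continuousOn

lemma intervalIntegrable_comp_prodMk_left {g : ℝ × ℝ → ℝ} (hg : ContinuousOn g U) {a b t : ℝ}
    (h : ∀ s ∈ uIcc a b, (s, t) ∈ U) : IntervalIntegrable (fun s => g (s, t)) volume a b :=
  (hg.comp (Continuous.prodMk_left t).continuousOn h).intervalIntegrable

lemma intervalIntegrable_comp_prodMk_right {g : ℝ × ℝ → ℝ} (hg : ContinuousOn g U) {a b s : ℝ}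
    (h : ∀ t ∈ uIcc a b, (s, t) ∈ U) : IntervalIntegrable (fun t => g (s, t)) volume a b :=
  (hg.comp (Continuous.prodMk_right s).continuousOn h).intervalIntegrable

lemma integral_partialFst (hU : IsOpen U) (hf : ContDiffOn ℝ 1 f U) {a b t : ℝ}
    (h : ∀ s ∈ uIcc a b, (s, t) ∈ U) :
    ∫ s in a..b, partialFst f (s, t) = f (b, t) - f (a, t) :=
  intervalIntegral.integral_eq_sub_of_hasDerivAt
    (fun s hs => hasDerivAt_partialFst
      ((hf.differentiableOn one_ne_zero).differentiableAt (hU.mem_nhds (h s hs))))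
    (intervalIntegrable_comp_prodMk_left
      (hf.partialFst_of_isOpen hU (zero_add _).le).continuousOn h)

lemma integral_partialSnd (hU : IsOpen U) (hf : ContDiffOn ℝ 1 f U) {a b s : ℝ}
    (h : ∀ t ∈ uIcc a b, (s, t) ∈ U) :
    ∫ t in a..b, partialSnd f (s, t) = f (s, b) - f (s, a) :=
  intervalIntegral.integral_eq_sub_of_hasDerivAt
    (fun t ht => hasDerivAt_partialSnd
      ((hf.differentiableOn one_ne_zero).differentiableAt (hU.mem_nhds (h t ht))))
    (intervalIntegrable_comp_prodMk_right
      (hf.partialSnd_of_isOpen hU (zero_add _).le).continuousOn h)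

theorem eq_sub_integral_partials (hU : IsOpen U) (hf : ContDiffOn ℝ 2 f U) {b d : ℝ}
    (hR : uIcc x b ×ˢ uIcc y d ⊆ U) :
    f (x, y) = f (b, d) - (∫ s in x..b, partialFst f (s, d)) - (∫ t in y..d, partialSnd f (b, t))
      + ∫ t in y..d, ∫ s in x..b, partialFst (partialSnd f) (s, t) := by
  have hR' : ∀ s ∈ uIcc x b, ∀ t ∈ uIcc y d, (s, t) ∈ U := fun s hs t ht => hR ⟨hs, ht⟩
  have hf₁ : ContDiffOn ℝ 1 f U := hf.of_le one_le_two
  have hf₂ : ContDiffOn ℝ 1 (partialSnd f) U := hf.partialSnd_of_isOpen hU (by norm_num)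
  have hmixed : ∫ t in y..d, ∫ s in x..b, partialFst (partialSnd f) (s, t)
      = ∫ t in y..d, (partialSnd f (b, t) - partialSnd f (x, t)) :=
    intervalIntegral.integral_congr fun t ht =>
      integral_partialFst hU hf₂ fun s hs => hR' s hs t ht
  rw [hmixed, intervalIntegral.integral_sub
      (intervalIntegrable_comp_prodMk_right hf₂.continuousOn (hR' b right_mem_uIcc))
      (intervalIntegrable_comp_prodMk_right hf₂.continuousOn (hR' x left_mem_uIcc)),
    integral_partialFst hU hf₁ fun s hs => hR' s hs d right_mem_uIcc,
    integral_partialSnd hU hf₁ (hR' b right_mem_uIcc),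
    integral_partialSnd hU hf₁ (hR' x left_mem_uIcc)]
  ring

end Partials

lemma Ici_inter_Icc_of_le {α : Type*} [Preorder α] {a b x : α} (h : a ≤ x) :
    Ici x ∩ Icc a b = Icc x b :=
  ext fun _ => ⟨fun ⟨hx, _, hb⟩ => ⟨hx, hb⟩, fun ⟨hx, hb⟩ => ⟨hx, h.trans hx, hb⟩⟩

lemma setIntegral_Ici_restrict_Icc {g : ℝ → ℝ} {a b x : ℝ} (hx : x ∈ Icc a b) :
    ∫ s in Ici x, g s ∂(volume.restrict (Icc a b)) = ∫ s in x..b, g s := by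
  rw [Measure.restrict_restrict measurableSet_Ici, Ici_inter_Icc_of_le hx.1,
    intervalIntegral.integral_of_le hx.2, integral_Icc_eq_integral_Ioc]

lemma setIntegral_Ici_restrict_Icc_prod_Icc {g : ℝ × ℝ → ℝ} {a b c d x y : ℝ}
    (hx : x ∈ Icc a b) (hy : y ∈ Icc c d) (hg : IntegrableOn g (Icc a b ×ˢ Icc c d)) :
    ∫ q in Ici (x, y), g q ∂(volume.restrict (Icc a b ×ˢ Icc c d))
      = ∫ t in y..d, ∫ s in x..b, g (s, t) := by
  have hsub : Icc x b ×ˢ Icc y d ⊆ Icc a b ×ˢ Icc c d :=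
    prod_mono (Icc_subset_Icc_left hx.1) (Icc_subset_Icc_left hy.1)
  have hset : Ici (x, y) ∩ Icc a b ×ˢ Icc c d = Icc x b ×ˢ Icc y d := by
    rw [← Ici_prod_Ici, prod_inter_prod, Ici_inter_Icc_of_le hx.1,
      Ici_inter_Icc_of_le hy.1]
  rw [Measure.restrict_restrict measurableSet_Ici, hset, Measure.volume_eq_prod,
    ← Measure.prod_restrict, integral_prod_symm _ (by
      rw [Measure.prod_restrict, ← Measure.volume_eq_prod]; exact hg.mono_set hsub),
    intervalIntegral.integral_of_le hy.2, ← integral_Icc_eq_integral_Ioc]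
  simp only [intervalIntegral.integral_of_le hx.2, integral_Icc_eq_integral_Ioc]

lemma setOf_fst_le_eq {Ω α β : Type*} [Preorder α] [Preorder β] {X : Ω → α × β} {d : β}
    (h : ∀ ω, (X ω).2 ≤ d) (s : α) : {ω | (X ω).1 ≤ s} = {ω | X ω ≤ (s, d)} :=
  ext fun ω => (and_iff_left (h ω)).symm

lemma setOf_snd_le_eq {Ω α β : Type*} [Preorder α] [Preorder β] {X : Ω → α × β} {b : α}
    (h : ∀ ω, (X ω).1 ≤ b) (t : β) : {ω | (X ω).2 ≤ t} = {ω | X ω ≤ (b, t)} :=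
  ext fun ω => (and_iff_right (h ω)).symm

section CdfFormula

variable {f : ℝ × ℝ → ℝ} {U : Set (ℝ × ℝ)} {a b c d : ℝ}

lemma integrableOn_partialFst_prodMk_left (hU : IsOpen U) (hf : ContDiffOn ℝ 1 f U)
    (hR : Icc a b ×ˢ Icc c d ⊆ U) (hd : d ∈ Icc c d) :
    IntegrableOn (fun s => partialFst f (s, d)) (Icc a b) :=
  ((hf.partialFst_of_isOpen hU (zero_add _).le).continuousOn.comp
    (Continuous.prodMk_left d).continuousOn fun _ hs => hR ⟨hs, hd⟩).integrableOn_compact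
    isCompact_Icc

lemma integrableOn_partialSnd_prodMk_right (hU : IsOpen U) (hf : ContDiffOn ℝ 1 f U)
    (hR : Icc a b ×ˢ Icc c d ⊆ U) (hb : b ∈ Icc a b) :
    IntegrableOn (fun t => partialSnd f (b, t)) (Icc c d) :=
  ((hf.partialSnd_of_isOpen hU (zero_add _).le).continuousOn.comp
    (Continuous.prodMk_right b).continuousOn fun _ ht => hR ⟨hb, ht⟩).integrableOn_compact
    isCompact_Icc

lemma integrableOn_partialFst_partialSnd (hU : IsOpen U) (hf : ContDiffOn ℝ 2 f U)
    (hR : Icc a b ×ˢ Icc c d ⊆ U) :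
    IntegrableOn (partialFst (partialSnd f)) (Icc a b ×ˢ Icc c d) :=
  ((hf.continuousOn_partialFst_partialSnd hU).mono hR).integrableOn_compact
    (isCompact_Icc.prod isCompact_Icc)

lemma eq_sub_setIntegral_partials (hU : IsOpen U) (hf : ContDiffOn ℝ 2 f U)
    (hR : Icc a b ×ˢ Icc c d ⊆ U) {p : ℝ × ℝ} (hp : p ∈ Icc a b ×ˢ Icc c d) :
    f p = f (b, d) - (∫ s in Ici p.1, partialFst f (s, d) ∂(volume.restrict (Icc a b)))
      - (∫ t in Ici p.2, partialSnd f (b, t) ∂(volume.restrict (Icc c d)))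
      + ∫ q in Ici p, partialFst (partialSnd f) q ∂(volume.restrict (Icc a b ×ˢ Icc c d)) := by
  obtain ⟨x, y⟩ := p
  obtain ⟨hx, hy⟩ := hp
  rw [setIntegral_Ici_restrict_Icc hx, setIntegral_Ici_restrict_Icc hy,
    setIntegral_Ici_restrict_Icc_prod_Icc hx hy (integrableOn_partialFst_partialSnd hU hf hR)]
  refine eq_sub_integral_partials hU hf (subset_trans ?_ hR)
  rw [uIcc_of_le hx.2, uIcc_of_le hy.2]
  exact prod_mono (Icc_subset_Icc_left hx.1) (Icc_subset_Icc_left hy.1)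

theorem integral_comp_eq_sub_integral_partials_mul_cdf {α : Type*} [MeasurableSpace α]
    {ℙ : Measure α} [IsProbabilityMeasure ℙ] {X : α → ℝ × ℝ} (hX : Measurable X)
    (hXR : ∀ ω, X ω ∈ Icc a b ×ˢ Icc c d) (hU : IsOpen U) (hf : ContDiffOn ℝ 2 f U)
    (hR : Icc a b ×ˢ Icc c d ⊆ U) :
    ∫ ω, f (X ω) ∂ℙ = f (b, d)
      - (∫ s in Icc a b, partialFst f (s, d) * ℙ.real {ω | (X ω).1 ≤ s})
      - (∫ t in Icc c d, partialSnd f (b, t) * ℙ.real {ω | (X ω).2 ≤ t})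
      + ∫ q in Icc a b ×ˢ Icc c d, partialFst (partialSnd f) q * ℙ.real {ω | X ω ≤ q} := by
  obtain ⟨ω₀⟩ := nonempty_of_isProbabilityMeasure ℙ
  have hb : b ∈ Icc a b := right_mem_Icc.2 ((hXR ω₀).1.1.trans (hXR ω₀).1.2)
  have hd : d ∈ Icc c d := right_mem_Icc.2 ((hXR ω₀).2.1.trans (hXR ω₀).2.2)
  have h₁ := integrableOn_partialFst_prodMk_left hU (hf.of_le one_le_two) hR hd
  have h₂ := integrableOn_partialSnd_prodMk_right hU (hf.of_le one_le_two) hR hb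
  have h₃ := integrableOn_partialFst_partialSnd hU hf hR
  calc ∫ ω, f (X ω) ∂ℙ
      = ∫ ω, (f (b, d)
          - (∫ s in Ici (X ω).1, partialFst f (s, d) ∂(volume.restrict (Icc a b)))
          - (∫ t in Ici (X ω).2, partialSnd f (b, t) ∂(volume.restrict (Icc c d)))
          + ∫ q in Ici (X ω), partialFst (partialSnd f) q
              ∂(volume.restrict (Icc a b ×ˢ Icc c d))) ∂ℙ :=
        integral_congr_ae (ae_of_all _ fun ω => eq_sub_setIntegral_partials hU hf hR (hXR ω))
    _ = _ := by
      have hI₁ := integrable_setIntegral_Ici (ℙ := ℙ) hX.fst h₁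
      have hI₂ := integrable_setIntegral_Ici (ℙ := ℙ) hX.snd h₂
      have hI₃ := integrable_setIntegral_Ici (ℙ := ℙ) hX h₃
      rw [integral_add ?_ hI₃, integral_sub ?_ hI₂, integral_sub (integrable_const _) hI₁,
        integral_const, probReal_univ, one_smul, integral_setIntegral_Ici hX h₃,
        integral_setIntegral_Ici hX.fst h₁, integral_setIntegral_Ici hX.snd h₂]
      · exact (integrable_const _).sub hI₁
      · exact ((integrable_const _).sub hI₁).sub hI₂

theorem integral_comp_le_integral_comp_of_cdf_le {α : Type*} [MeasurableSpace α]
    {ℙ : Measure α} [IsProbabilityMeasure ℙ] {X Y : α → ℝ × ℝ} (hX : Measurable X)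
    (hY : Measurable Y) (hXR : ∀ ω, X ω ∈ Icc a b ×ˢ Icc c d)
    (hYR : ∀ ω, Y ω ∈ Icc a b ×ˢ Icc c d) (hU : IsOpen U) (hf : ContDiffOn ℝ 2 f U)
    (hR : Icc a b ×ˢ Icc c d ⊆ U) (h₁ : ∀ s ∈ Icc a b, 0 ≤ partialFst f (s, d))
    (h₂ : ∀ t ∈ Icc c d, 0 ≤ partialSnd f (b, t))
    (h₁₂ : ∀ q ∈ Icc a b ×ˢ Icc c d, partialFst (partialSnd f) q ≤ 0)
    (hcdf : ∀ q ∈ Icc a b ×ˢ Icc c d, ℙ.real {ω | X ω ≤ q} ≤ ℙ.real {ω | Y ω ≤ q}) :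
    ∫ ω, f (Y ω) ∂ℙ ≤ ∫ ω, f (X ω) ∂ℙ := by
  obtain ⟨ω₀⟩ := nonempty_of_isProbabilityMeasure ℙ
  have hb : b ∈ Icc a b := right_mem_Icc.2 ((hXR ω₀).1.1.trans (hXR ω₀).1.2)
  have hd : d ∈ Icc c d := right_mem_Icc.2 ((hXR ω₀).2.1.trans (hXR ω₀).2.2)
  have hc₁ := integrableOn_partialFst_prodMk_left hU (hf.of_le one_le_two) hR hd
  have hc₂ := integrableOn_partialSnd_prodMk_right hU (hf.of_le one_le_two) hR hb
  have hc₃ := integrableOn_partialFst_partialSnd hU hf hR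
  have e₁ : ∫ s in Icc a b, partialFst f (s, d) * ℙ.real {ω | (X ω).1 ≤ s}
      ≤ ∫ s in Icc a b, partialFst f (s, d) * ℙ.real {ω | (Y ω).1 ≤ s} := by
    refine setIntegral_mono_on (integrable_mul_measureReal_le hX.fst hc₁)
      (integrable_mul_measureReal_le hY.fst hc₁) measurableSet_Icc fun s hs => ?_
    rw [setOf_fst_le_eq (fun ω => (hXR ω).2.2), setOf_fst_le_eq (fun ω => (hYR ω).2.2)]
    exact mul_le_mul_of_nonneg_left (hcdf _ ⟨hs, hd⟩) (h₁ s hs)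
  have e₂ : ∫ t in Icc c d, partialSnd f (b, t) * ℙ.real {ω | (X ω).2 ≤ t}
      ≤ ∫ t in Icc c d, partialSnd f (b, t) * ℙ.real {ω | (Y ω).2 ≤ t} := by
    refine setIntegral_mono_on (integrable_mul_measureReal_le hX.snd hc₂)
      (integrable_mul_measureReal_le hY.snd hc₂) measurableSet_Icc fun t ht => ?_
    rw [setOf_snd_le_eq (fun ω => (hXR ω).1.2), setOf_snd_le_eq (fun ω => (hYR ω).1.2)]
    exact mul_le_mul_of_nonneg_left (hcdf _ ⟨hb, ht⟩) (h₂ t ht)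
  have e₃ : ∫ q in Icc a b ×ˢ Icc c d, partialFst (partialSnd f) q * ℙ.real {ω | Y ω ≤ q}
      ≤ ∫ q in Icc a b ×ˢ Icc c d, partialFst (partialSnd f) q * ℙ.real {ω | X ω ≤ q} :=
    setIntegral_mono_on (integrable_mul_measureReal_le hY hc₃)
      (integrable_mul_measureReal_le hX hc₃) (measurableSet_Icc.prod measurableSet_Icc)
      fun q hq => mul_le_mul_of_nonpos_left (hcdf q hq) (h₁₂ q hq)
  rw [integral_comp_eq_sub_integral_partials_mul_cdf hX hXR hU hf hR,
    integral_comp_eq_sub_integral_partials_mul_cdf hY hYR hU hf hR]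
  linarith

end CdfFormula

/-- **First order bivariate stochastic dominance over the submodular class `Φ⁻`.**
`(X₁,Y₁)` and `(X₂,Y₂)` are random vectors with values in the unit square and
cdfs `F₁`, `F₂`.  If `F₁(s,t) ≤ F₂(s,t)` on the unit square, then
`E[φ(X₁,Y₁)] ≥ E[φ(X₂,Y₂)]` for every `φ : ℝ² → ℝ` that is `C²` on an open
connected set `Ω ⊇ [0,1]²`, increasing in each argument, and submodular
(`∂²φ/∂x∂y ≤ 0` on `Ω`). -/
theorem first_order_bivariate_SD_submodular
    {α : Type*} [MeasurableSpace α] (ℙ : Measure α) [IsProbabilityMeasure ℙ]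
    (V W : α → ℝ × ℝ) (hV : Measurable V) (hW : Measurable W)
    (hVr : ∀ ω, V ω ∈ Icc (0:ℝ) 1 ×ˢ Icc (0:ℝ) 1)
    (hWr : ∀ ω, W ω ∈ Icc (0:ℝ) 1 ×ˢ Icc (0:ℝ) 1)
    (F₁ F₂ : ℝ → ℝ → ℝ)
    (hF₁ : ∀ s t : ℝ, F₁ s t = (ℙ {ω | (V ω).1 ≤ s ∧ (V ω).2 ≤ t}).toReal)
    (hF₂ : ∀ s t : ℝ, F₂ s t = (ℙ {ω | (W ω).1 ≤ s ∧ (W ω).2 ≤ t}).toReal)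
    (hdom : ∀ s ∈ Icc (0:ℝ) 1, ∀ t ∈ Icc (0:ℝ) 1, F₁ s t ≤ F₂ s t) :
    ∀ φ : ℝ → ℝ → ℝ,
      (∃ U : Set (ℝ × ℝ), IsOpen U ∧ IsConnected U ∧
          Icc (0:ℝ) 1 ×ˢ Icc (0:ℝ) 1 ⊆ U ∧
          ContDiffOn ℝ 2 (fun q : ℝ × ℝ => φ q.1 q.2) U ∧
          -- submodularity: ∂²φ/∂x∂y ≤ 0 on Ω
          (∀ q ∈ U, deriv (fun x => deriv (fun y => φ x y) q.2) q.1 ≤ 0)) →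
      (∀ y : ℝ, Monotone fun x => φ x y) →
      (∀ x : ℝ, Monotone fun y => φ x y) →
      ∫ ω, φ (W ω).1 (W ω).2 ∂ℙ ≤ ∫ ω, φ (V ω).1 (V ω).2 ∂ℙ := by
  rintro φ ⟨U, hU, -, hR, hφ, hsub⟩ hmono₁ hmono₂
  have hdiff : ∀ p ∈ U, DifferentiableAt ℝ (fun q : ℝ × ℝ => φ q.1 q.2) p := fun p hp =>
    (hφ.differentiableOn two_ne_zero).differentiableAt (hU.mem_nhds hp)
  have hφ₂ := hφ.partialSnd_of_isOpen hU (by norm_num : (1 : WithTop ℕ∞) + 1 ≤ 2)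
  have hmixed : ∀ q ∈ U, partialFst (partialSnd fun q : ℝ × ℝ => φ q.1 q.2) q ≤ 0 :=
    fun q hq => deriv_deriv_eq_partialFst_partialSnd hU (hφ.differentiableOn two_ne_zero) hq
      ((hφ₂.differentiableOn one_ne_zero).differentiableAt (hU.mem_nhds hq)) ▸ hsub q hq
  have h1 : (1 : ℝ) ∈ Icc (0 : ℝ) 1 := right_mem_Icc.2 zero_le_one
  refine integral_comp_le_integral_comp_of_cdf_le hV hW hVr hWr hU hφ hR
    (fun s hs => (hasDerivAt_partialFst (hdiff _ (hR ⟨hs, h1⟩))).nonneg_of_monotone (hmono₁ 1))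
    (fun t ht => (hasDerivAt_partialSnd (hdiff _ (hR ⟨h1, ht⟩))).nonneg_of_monotone (hmono₂ 1))
    (fun q hq => hmixed q (hR hq)) fun q hq => ?_
  have hcdf := hdom q.1 hq.1 q.2 hq.2
  rw [hF₁, hF₂] at hcdf
  exact hcdf
end

section
/- Let (X₁,Y₁) and (X₂,Y₂) be random vectors taking values in the unit square [0,1]×[0,1], with cdfs F₁ and F₂ and marginal cdfs Fᵢ^X, Fᵢ^Y. Define Hᵢ(x,y) = ∫₀ˣ∫₀ʸ Fᵢ(s,t) dt ds, Hᵢ^X(x) = ∫₀ˣ Fᵢ^X(s) ds, and Hᵢ^Y(y) = ∫₀ʸ Fᵢ^Y(t) dt for i = 1,2. If H₁(x,y) ≤ H₂(x,y), H₁^X(x) ≤ H₂^X(x), and H₁^Y(y) ≤ H₂^Y(y) for all (x,y) ∈ [0,1]×[0,1], then for every function φ in the class Φ⁻⁻ one has E[φ(X₁,Y₁)] ≥ E[φ(X₂,Y₂)]. -/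
open Set MeasureTheory intervalIntegral


noncomputable def DDx (f : ℝ × ℝ → ℝ) : ℝ × ℝ → ℝ := fun q => fderiv ℝ f q (1, 0)
noncomputable def DDy (f : ℝ × ℝ → ℝ) : ℝ × ℝ → ℝ := fun q => fderiv ℝ f q (0, 1)

lemma DDx_contDiffOn {f : ℝ × ℝ → ℝ} {U : Set (ℝ × ℝ)} {n m : WithTop ℕ∞}
    (hf : ContDiffOn ℝ n f U) (hU : IsOpen U) (h : m + 1 ≤ n) :
    ContDiffOn ℝ m (DDx f) U :=
  (hf.fderiv_of_isOpen hU h).clm_apply contDiffOn_const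

lemma DDx_measurable (f : ℝ × ℝ → ℝ) : Measurable (DDx f) :=
  measurable_fderiv_apply_const ℝ f _

lemma hasDerivAt_slice_x {f : ℝ × ℝ → ℝ} {U : Set (ℝ × ℝ)} {n : WithTop ℕ∞}
    (hf : ContDiffOn ℝ n f U) (hU : IsOpen U) (hn : 1 ≤ n) {q : ℝ × ℝ} (hq : q ∈ U) :
    HasDerivAt (fun x => f (x, q.2)) (DDx f q) q.1 := by
  have hd : DifferentiableAt ℝ f q := (hf.contDiffAt (hU.mem_nhds hq)).differentiableAt (zero_lt_one.trans_le hn).ne'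
  have h1 : HasDerivAt (fun x : ℝ => (x, q.2)) ((1 : ℝ), (0 : ℝ)) q.1 :=
    (hasDerivAt_id q.1).prodMk (hasDerivAt_const q.1 q.2)
  have := hd.hasFDerivAt.comp_hasDerivAt q.1 (by simpa using h1)
  exact this


lemma hasDerivAt_slice_y {f : ℝ × ℝ → ℝ} {U : Set (ℝ × ℝ)} {n : WithTop ℕ∞}
    (hf : ContDiffOn ℝ n f U) (hU : IsOpen U) (hn : 1 ≤ n) {q : ℝ × ℝ} (hq : q ∈ U) :
    HasDerivAt (fun y => f (q.1, y)) (DDy f q) q.2 := by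
  have hd : DifferentiableAt ℝ f q := (hf.contDiffAt (hU.mem_nhds hq)).differentiableAt (zero_lt_one.trans_le hn).ne'
  have h1 : HasDerivAt (fun y : ℝ => (q.1, y)) ((0 : ℝ), (1 : ℝ)) q.2 :=
    (hasDerivAt_const q.2 q.1).prodMk (hasDerivAt_id q.2)
  have := hd.hasFDerivAt.comp_hasDerivAt q.2 (by simpa using h1)
  exact this

/-- derivative of an eventually-equal function -/
lemma deriv_eq_on_open {g h : ℝ → ℝ} {S : Set ℝ} (hS : IsOpen S) {u : ℝ} (hu : u ∈ S)
    (he : ∀ x ∈ S, g x = h x) : deriv g u = deriv h u :=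
  Filter.EventuallyEq.deriv_eq <| Filter.eventuallyEq_of_mem (hS.mem_nhds hu) he

lemma iteratedDeriv_two_eq {g g1 : ℝ → ℝ} {S : Set ℝ} (hS : IsOpen S) {u : ℝ} (hu : u ∈ S)
    (h1 : ∀ x ∈ S, HasDerivAt g (g1 x) x) {d : ℝ} (h2 : HasDerivAt g1 d u) :
    iteratedDeriv 2 g u = d := by
  have : iteratedDeriv 2 g u = deriv (deriv g) u := by
    rw [iteratedDeriv_succ, iteratedDeriv_one]
  rw [this, deriv_eq_on_open hS hu (fun x hx => (h1 x hx).deriv)]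
  exact h2.deriv

lemma iteratedDeriv_two_congr {g h : ℝ → ℝ} {S : Set ℝ} (hS : IsOpen S) {u : ℝ} (hu : u ∈ S)
    (he : ∀ x ∈ S, g x = h x) : iteratedDeriv 2 g u = iteratedDeriv 2 h u := by
  have hmem : S ∈ nhds u := hS.mem_nhds hu
  have hgh : g =ᶠ[nhds u] h := Filter.eventuallyEq_of_mem hmem he
  simp only [iteratedDeriv_succ, iteratedDeriv_one]
  exact Filter.EventuallyEq.deriv_eq (Filter.EventuallyEq.deriv hgh)

lemma monotone_deriv_nonneg {f : ℝ → ℝ} (hf : Monotone f) {x d : ℝ} (h : HasDerivAt f d x) :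
    0 ≤ d := by
  have ht := hasDerivAt_iff_tendsto_slope.1 h
  refine ge_of_tendsto ht (Filter.eventually_of_mem self_mem_nhdsWithin ?_)
  intro y hy
  rcases lt_or_gt_of_ne (Set.mem_compl_singleton_iff.1 hy) with hlt | hgt
  · have : f y ≤ f x := hf hlt.le
    have hs : slope f x y = (f y - f x) / (y - x) := slope_def_field f x y ▸ by
      simp [slope, vsub_eq_sub]
    rw [hs]
    exact div_nonneg_iff.2 (Or.inr ⟨by linarith, by linarith⟩)
  · have : f x ≤ f y := hf hgt.le
    have hs : slope f x y = (f y - f x) / (y - x) := slope_def_field f x y ▸ by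
      simp [slope, vsub_eq_sub]
    rw [hs]
    exact div_nonneg (by linarith) (by linarith)

lemma intervalIntegrable_of_bounded {f : ℝ → ℝ} {a b : ℝ}
    (hm : AEStronglyMeasurable f volume) {M : ℝ}
    (hb : ∀ u ∈ uIoc a b, |f u| ≤ M) : IntervalIntegrable f volume a b := by
  rw [intervalIntegrable_iff]
  exact Measure.integrableOn_of_bounded (by rw [Set.uIoc]; exact measure_Ioc_lt_top.ne) hm
    ((ae_restrict_iff' measurableSet_uIoc).2 (Filter.Eventually.of_forall (by simpa using hb)))

lemma integrable_of_bounded_fin {β : Type*} [MeasurableSpace β] {μ : Measure β}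
    [IsFiniteMeasure μ] {f : β → ℝ} (hm : AEStronglyMeasurable f μ) {M : ℝ}
    (hb : ∀ x, |f x| ≤ M) : Integrable f μ :=
  (integrable_const M).mono' hm (Filter.Eventually.of_forall (by simpa using hb))

lemma second_order_expansion {g g' g'' : ℝ → ℝ} {S : Set ℝ} (hS : IsOpen S)
    (hS1 : Icc (0:ℝ) 1 ⊆ S)
    (hg : ∀ s ∈ S, HasDerivAt g (g' s) s) (hg' : ∀ s ∈ S, HasDerivAt g' (g'' s) s)
    (hc'' : ContinuousOn g'' S)
    {x : ℝ} (hx : x ∈ Icc (0:ℝ) 1) :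
    g x = g 1 - (1 - x) * g' 1 + ∫ u in (0:ℝ)..1, g'' u * max (u - x) 0 := by
  obtain ⟨hx0, hx1⟩ := hx
  have hIcc : uIcc x 1 = Icc x 1 := uIcc_of_le hx1
  have hsubIcc : Icc x 1 ⊆ Icc (0:ℝ) 1 := Icc_subset_Icc hx0 le_rfl
  have hsubS : Icc x 1 ⊆ S := fun s hs => hS1 (hsubIcc hs)
  have hc' : ContinuousOn g' S := fun s hs => ((hg' s hs).continuousAt).continuousWithinAt
  have hint_g' : IntervalIntegrable g' volume x 1 :=
    (hc'.mono (hIcc ▸ hsubS)).intervalIntegrable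
  have ftc1 : ∫ s in x..1, g' s = g 1 - g x :=
    integral_eq_sub_of_hasDerivAt (fun s hs => hg s (hsubS (hIcc ▸ hs))) hint_g'
  set P : ℝ → ℝ := fun s => ∫ u in s..1, g'' u with hP
  have hPderiv : ∀ s ∈ Icc (0:ℝ) 1, HasDerivAt P (-g'' s) s := by
    intro s hs
    refine integral_hasDerivAt_left ((hc''.mono ?_).intervalIntegrable) ?_ ?_
    · rw [uIcc_of_le hs.2]; exact fun r hr => hS1 ⟨le_trans hs.1 hr.1, hr.2⟩
    · exact ContinuousOn.stronglyMeasurableAtFilter hS hc'' s (hS1 hs)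
    · exact hc''.continuousAt (hS.mem_nhds (hS1 hs))
  have ftc2 : ∀ s ∈ Icc x 1, g' s = g' 1 - P s := by
    intro s hs
    have : ∫ u in s..1, g'' u = g' 1 - g' s :=
      integral_eq_sub_of_hasDerivAt
        (fun u hu => hg' u (hsubS (by rw [uIcc_of_le hs.2] at hu; exact ⟨le_trans hs.1 hu.1, hu.2⟩)))
        ((hc''.mono (fun u hu => by
          rw [uIcc_of_le hs.2] at hu
          exact hsubS ⟨le_trans hs.1 hu.1, hu.2⟩)).intervalIntegrable)
    simp only [hP]; linarith [this]
  have hPcont : ContinuousOn P (uIcc x 1) := by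
    rw [hIcc]
    exact fun s hs => ((hPderiv s (hsubIcc hs)).continuousAt).continuousWithinAt
  have parts : ∫ s in x..1, P s * 1 =
      P 1 * (1 - x) - P x * (x - x) - ∫ s in x..1, (-g'' s) * (s - x) := by
    refine integral_mul_deriv_eq_deriv_mul_of_hasDerivAt hPcont
      ((continuous_id.sub continuous_const).continuousOn) ?_ ?_ ?_ ?_
    · intro s hs
      rw [min_eq_left hx1, max_eq_right hx1] at hs
      exact hPderiv s (hsubIcc ⟨le_of_lt hs.1, le_of_lt hs.2⟩)
    · intro s hs
      exact (hasDerivAt_id s).sub_const x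
    · refine ContinuousOn.intervalIntegrable ?_
      rw [hIcc]
      exact (hc''.mono hsubS).neg
    · exact intervalIntegrable_const
  have hP1 : P 1 = 0 := by simp [hP]
  have key1 : ∫ s in x..1, P s = ∫ s in x..1, g'' s * (s - x) := by
    have := parts
    simp only [hP1, mul_one, sub_self, mul_zero, zero_mul, zero_sub] at this
    rw [this, ← intervalIntegral.integral_neg]
    congr 1; ext s; ring
  have hcont01 : ContinuousOn g'' (Icc (0:ℝ) 1) := hc''.mono hS1
  have int1 : IntervalIntegrable (fun u => g'' u * max (u - x) 0) volume 0 x := by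
    apply ContinuousOn.intervalIntegrable
    rw [uIcc_of_le hx0]
    exact (hcont01.mono (Icc_subset_Icc le_rfl hx1)).mul
      ((continuous_id.sub continuous_const).max continuous_const).continuousOn
  have int2 : IntervalIntegrable (fun u => g'' u * max (u - x) 0) volume x 1 := by
    apply ContinuousOn.intervalIntegrable
    rw [hIcc]
    exact (hcont01.mono hsubIcc).mul
      ((continuous_id.sub continuous_const).max continuous_const).continuousOn
  have split : ∫ u in (0:ℝ)..1, g'' u * max (u - x) 0 =
      (∫ u in (0:ℝ)..x, g'' u * max (u - x) 0) + ∫ u in x..1, g'' u * max (u - x) 0 :=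
    (integral_add_adjacent_intervals int1 int2).symm
  have z1 : ∫ u in (0:ℝ)..x, g'' u * max (u - x) 0 = 0 := by
    rw [integral_congr (g := fun _ => (0:ℝ)) ?_, intervalIntegral.integral_zero]
    intro u hu
    rw [uIcc_of_le hx0] at hu
    simp only
    rw [max_eq_right (by linarith [hu.2]), mul_zero]
  have z2 : ∫ u in x..1, g'' u * max (u - x) 0 = ∫ u in x..1, g'' u * (u - x) := by
    refine integral_congr ?_
    intro u hu
    rw [hIcc] at hu
    simp only
    rw [max_eq_left (by linarith [hu.1])]
  have congrP : ∫ s in x..1, P s = ∫ s in x..1, g' 1 - g' s := by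
    refine integral_congr ?_
    intro s hs
    rw [hIcc] at hs
    have := ftc2 s hs; simp only; linarith
  have T : ∫ u in (0:ℝ)..1, g'' u * max (u - x) 0 = (1 - x) * g' 1 - (g 1 - g x) := by
    rw [split, z1, z2, zero_add, ← key1, congrP,
      integral_sub intervalIntegrable_const hint_g', ftc1, intervalIntegral.integral_const]
    simp only [smul_eq_mul]
    try ring
  rw [T]; ring

lemma integral_ite_le {x u : ℝ} (hx : 0 ≤ x) (hu : 0 ≤ u) :
    (∫ s in (0:ℝ)..u, (if x ≤ s then (1:ℝ) else 0)) = max (u - x) 0 := by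
  rw [integral_of_le hu]
  have h1 : ∀ s : ℝ, (if x ≤ s then (1:ℝ) else 0) = (Ici x).indicator (fun _ => (1:ℝ)) s := by
    intro s; simp [Set.indicator_apply, mem_Ici]
  rw [setIntegral_congr_fun measurableSet_Ioc (fun s _ => h1 s),
    setIntegral_indicator measurableSet_Ici, setIntegral_const]
  have hae : (Ioc 0 u ∩ Ici x : Set ℝ) =ᵐ[volume] (Ioc 0 u ∩ Ioi x : Set ℝ) :=
    Filter.EventuallyEq.inter (Filter.EventuallyEq.refl _ _) MeasureTheory.Ioi_ae_eq_Ici.symm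
  rw [measureReal_def, measure_congr hae, Ioc_inter_Ioi, max_eq_right hx, Real.volume_Ioc,
    smul_eq_mul, mul_one]
  rcases le_total x u with h | h
  · rw [ENNReal.toReal_ofReal (by linarith), max_eq_left (by linarith)]
  · rw [ENNReal.ofReal_of_nonpos (by linarith), max_eq_right (by linarith)]
    simp

section Swap
variable {α : Type*} [MeasurableSpace α] {μ : Measure α} [IsProbabilityMeasure μ]

lemma swap_restrict {a b : ℝ} (hab : a ≤ b)
    {f : α × ℝ → ℝ} (hf : AEStronglyMeasurable f (μ.prod (volume.restrict (Ioc a b))))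
    {M : ℝ} (hb : ∀ ω, ∀ u ∈ Ioc a b, |f (ω, u)| ≤ M) :
    ∫ ω, (∫ u in a..b, f (ω, u)) ∂μ = ∫ u in a..b, (∫ ω, f (ω, u) ∂μ) := by
  set ν : Measure ℝ := volume.restrict (Ioc a b) with hν
  have hfin : IsFiniteMeasure ν := by
    constructor
    rw [hν, Measure.restrict_apply_univ]
    exact measure_Ioc_lt_top
  have hnull0 : (μ.prod ν) {p : α × ℝ | p.2 ∉ Ioc a b} = 0 := by
    have hset : {p : α × ℝ | p.2 ∉ Ioc a b} = (univ : Set α) ×ˢ (Ioc a b)ᶜ := by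
      ext p; simp [mem_prod]
    rw [hset, Measure.prod_prod, hν, Measure.restrict_apply measurableSet_Ioc.compl]
    simp
  have haebd : ∀ᵐ p ∂(μ.prod ν), ‖f p‖ ≤ M := by
    rw [MeasureTheory.ae_iff]
    refine measure_mono_null ?_ hnull0
    intro p hp
    simp only [mem_setOf_eq, not_le] at hp ⊢
    intro hmem
    exact absurd hp (not_lt.2 (by simpa [Real.norm_eq_abs] using hb p.1 p.2 hmem))
  have hint : Integrable f (μ.prod ν) := Integrable.mono' (integrable_const M) hf haebd
  have hpt : ∀ ω, (∫ u in a..b, f (ω, u)) = ∫ u, f (ω, u) ∂ν := fun ω => integral_of_le hab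
  rw [integral_of_le hab]
  simp_rw [hpt]
  exact integral_integral_swap hint

end Swap
lemma DDy_contDiffOn {f : ℝ × ℝ → ℝ} {U : Set (ℝ × ℝ)} {n m : WithTop ℕ∞}
    (hf : ContDiffOn ℝ n f U) (hU : IsOpen U) (h : m + 1 ≤ n) :
    ContDiffOn ℝ m (DDy f) U :=
  (hf.fderiv_of_isOpen hU h).clm_apply contDiffOn_const

lemma DDy_measurable (f : ℝ × ℝ → ℝ) : Measurable (DDy f) :=
  measurable_fderiv_apply_const ℝ f _

lemma master_identity {Φ : ℝ × ℝ → ℝ} {U : Set (ℝ × ℝ)} (hU : IsOpen U)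
    (hsub : Icc (0:ℝ) 1 ×ˢ Icc (0:ℝ) 1 ⊆ U) (hΦ : ContDiffOn ℝ 4 Φ U)
    {x y : ℝ} (hx : x ∈ Icc (0:ℝ) 1) (hy : y ∈ Icc (0:ℝ) 1) :
    Φ (x, y)
      = Φ (1,1) - (1-x) * DDx Φ (1,1)
        + (∫ u in (0:ℝ)..1, DDx (DDx Φ) (u,1) * max (u-x) 0)
        - (1-y) * (DDy Φ (1,1) - (1-x) * DDx (DDy Φ) (1,1)
            + ∫ u in (0:ℝ)..1, DDx (DDx (DDy Φ)) (u,1) * max (u-x) 0)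
        + (∫ v in (0:ℝ)..1, DDy (DDy Φ) (1,v) * max (v-y) 0)
        - (1-x) * (∫ v in (0:ℝ)..1, DDx (DDy (DDy Φ)) (1,v) * max (v-y) 0)
        + ∫ v in (0:ℝ)..1,
            (∫ u in (0:ℝ)..1, DDx (DDx (DDy (DDy Φ))) (u,v) * max (u-x) 0) * max (v-y) 0 := by
  have hmem : ∀ {a b : ℝ}, a ∈ Icc (0:ℝ) 1 → b ∈ Icc (0:ℝ) 1 → (a,b) ∈ U :=
    fun ha hb => hsub (mk_mem_prod ha hb)
  have hΦ2 : ContDiffOn ℝ 3 (DDy Φ) U := DDy_contDiffOn hΦ hU (by norm_num)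
  have hΦ22 : ContDiffOn ℝ 2 (DDy (DDy Φ)) U := DDy_contDiffOn hΦ2 hU (by norm_num)
  have hΦ122 : ContDiffOn ℝ 1 (DDx (DDy (DDy Φ))) U := DDx_contDiffOn hΦ22 hU (by norm_num)
  have hΦ1122 : ContDiffOn ℝ 0 (DDx (DDx (DDy (DDy Φ)))) U := DDx_contDiffOn hΦ122 hU (by norm_num)
  -- generic x-direction expansion
  have xexp : ∀ (g2 : ℝ×ℝ→ℝ) (n : WithTop ℕ∞), ContDiffOn ℝ n g2 U → 2 ≤ n → ∀ t ∈ Icc (0:ℝ) 1,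
      g2 (x, t) = g2 (1, t) - (1-x) * DDx g2 (1, t)
        + ∫ u in (0:ℝ)..1, DDx (DDx g2) (u, t) * max (u - x) 0 := by
    intro g2 n hg2 hn t ht
    have hS : IsOpen {s : ℝ | (s, t) ∈ U} := hU.preimage (by fun_prop)
    have hS1 : Icc (0:ℝ) 1 ⊆ {s : ℝ | (s, t) ∈ U} := fun s hs => hmem hs ht
    have hg21 : ContDiffOn ℝ 1 (DDx g2) U :=
      DDx_contDiffOn hg2 hU (le_trans (by norm_num) hn)
    have hg2'' : ContDiffOn ℝ 0 (DDx (DDx g2)) U := DDx_contDiffOn hg21 hU (by norm_num)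
    have hder1 : ∀ s ∈ {s : ℝ | (s, t) ∈ U}, HasDerivAt (fun z => g2 (z, t)) (DDx g2 (s, t)) s :=
      fun s hs => hasDerivAt_slice_x hg2 hU (le_trans (by norm_num) hn) hs
    have hder2 : ∀ s ∈ {s : ℝ | (s, t) ∈ U},
        HasDerivAt (fun z => DDx g2 (z, t)) (DDx (DDx g2) (s, t)) s :=
      fun s hs => hasDerivAt_slice_x hg21 hU le_rfl hs
    have hcont : ContinuousOn (fun s => DDx (DDx g2) (s, t)) {s : ℝ | (s, t) ∈ U} :=
      (hg2''.continuousOn).comp ((Continuous.prodMk_left t).continuousOn) (fun s hs => hs)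
    exact second_order_expansion hS hS1 hder1 hder2 hcont ⟨hx.1, hx.2⟩
  -- y-direction expansion of Φ at x
  have hSy : IsOpen {t : ℝ | (x, t) ∈ U} := hU.preimage (by fun_prop)
  have hSy1 : Icc (0:ℝ) 1 ⊆ {t : ℝ | (x, t) ∈ U} := fun t ht => hmem hx ht
  have hdery1 : ∀ t ∈ {t : ℝ | (x, t) ∈ U}, HasDerivAt (fun z => Φ (x, z)) (DDy Φ (x, t)) t :=
    fun t ht => hasDerivAt_slice_y hΦ hU (by norm_num) ht
  have hdery2 : ∀ t ∈ {t : ℝ | (x, t) ∈ U},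
      HasDerivAt (fun z => DDy Φ (x, z)) (DDy (DDy Φ) (x, t)) t :=
    fun t ht => hasDerivAt_slice_y hΦ2 hU (by norm_num) ht
  have hconty : ContinuousOn (fun t => DDy (DDy Φ) (x, t)) {t : ℝ | (x, t) ∈ U} :=
    (hΦ22.continuousOn).comp ((Continuous.prodMk_right x).continuousOn) (fun t ht => ht)
  have yexp : Φ (x, y) = Φ (x, 1) - (1-y) * DDy Φ (x, 1)
      + ∫ v in (0:ℝ)..1, DDy (DDy Φ) (x, v) * max (v - y) 0 :=
    second_order_expansion hSy hSy1 hdery1 hdery2 hconty ⟨hy.1, hy.2⟩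
  -- expansions of the three x-slices
  have eA : Φ (x, 1) = Φ (1,1) - (1-x) * DDx Φ (1,1)
      + ∫ u in (0:ℝ)..1, DDx (DDx Φ) (u,1) * max (u-x) 0 :=
    xexp Φ 4 hΦ (by norm_num) 1 (by norm_num)
  have eB : DDy Φ (x, 1) = DDy Φ (1,1) - (1-x) * DDx (DDy Φ) (1,1)
      + ∫ u in (0:ℝ)..1, DDx (DDx (DDy Φ)) (u,1) * max (u-x) 0 :=
    xexp (DDy Φ) 3 hΦ2 (by norm_num) 1 (by norm_num)
  have eC : ∀ v ∈ Icc (0:ℝ) 1, DDy (DDy Φ) (x, v)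
      = DDy (DDy Φ) (1,v) - (1-x) * DDx (DDy (DDy Φ)) (1,v)
        + ∫ u in (0:ℝ)..1, DDx (DDx (DDy (DDy Φ))) (u,v) * max (u-x) 0 :=
    fun v hv => xexp (DDy (DDy Φ)) 2 hΦ22 le_rfl v hv
  -- bound for the innermost integrand on the unit square
  obtain ⟨M4, hM4⟩ : ∃ M : ℝ, ∀ q ∈ Icc (0:ℝ) 1 ×ˢ Icc (0:ℝ) 1,
      ‖DDx (DDx (DDy (DDy Φ))) q‖ ≤ M :=
    (isCompact_Icc.prod isCompact_Icc).exists_bound_of_continuousOn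
      (hΦ1122.continuousOn.mono hsub)
  -- integrability of the three pieces in v
  have hmax1 : ∀ {w z : ℝ}, w ∈ Icc (0:ℝ) 1 → z ∈ Icc (0:ℝ) 1 → |max (w - z) 0| ≤ 1 := by
    intro w z hw hz
    rw [abs_of_nonneg (le_max_right _ _)]
    exact max_le (by linarith [hw.2, hz.1]) zero_le_one
  have i1 : IntervalIntegrable (fun v => DDy (DDy Φ) (1,v) * max (v-y) 0) volume 0 1 := by
    apply ContinuousOn.intervalIntegrable
    rw [uIcc_of_le zero_le_one]
    exact ((hΦ22.continuousOn.comp ((Continuous.prodMk_right 1).continuousOn)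
      (fun v hv => hmem (by norm_num) hv)).mul
      ((continuous_id.sub continuous_const).max continuous_const).continuousOn)
  have i2 : IntervalIntegrable (fun v => (1-x) * (DDx (DDy (DDy Φ)) (1,v) * max (v-y) 0)) volume 0 1 := by
    apply ContinuousOn.intervalIntegrable
    rw [uIcc_of_le zero_le_one]
    exact ((continuousOn_const).mul ((hΦ122.continuousOn.comp ((Continuous.prodMk_right 1).continuousOn)
      (fun v hv => hmem (by norm_num) hv)).mul
      ((continuous_id.sub continuous_const).max continuous_const).continuousOn))
  have hinner_meas : AEStronglyMeasurable
      (fun v => ∫ u in (0:ℝ)..1, DDx (DDx (DDy (DDy Φ))) (u,v) * max (u-x) 0) volume := by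
    have hrw : (fun v => ∫ u in (0:ℝ)..1, DDx (DDx (DDy (DDy Φ))) (u,v) * max (u-x) 0)
        = fun v => ∫ u, DDx (DDx (DDy (DDy Φ))) (u,v) * max (u-x) 0
            ∂(volume.restrict (Ioc 0 1)) := by
      funext v; exact integral_of_le zero_le_one
    rw [hrw]
    have hm : Measurable fun p : ℝ × ℝ => DDx (DDx (DDy (DDy Φ))) (p.2, p.1) * max (p.2 - x) 0 :=
      ((DDx_measurable _).comp measurable_swap).mul
        ((measurable_snd.sub measurable_const).max measurable_const)
    exact (hm.stronglyMeasurable.integral_prod_right').aestronglyMeasurable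
  have hinner_bd : ∀ v ∈ Icc (0:ℝ) 1,
      |∫ u in (0:ℝ)..1, DDx (DDx (DDy (DDy Φ))) (u,v) * max (u-x) 0| ≤ M4 := by
    intro v hv
    have := intervalIntegral.norm_integral_le_of_norm_le_const
      (C := M4) (f := fun u => DDx (DDx (DDy (DDy Φ))) (u,v) * max (u-x) 0)
      (a := (0:ℝ)) (b := 1) ?_
    · simpa [Real.norm_eq_abs] using this
    · intro u hu
      rw [uIoc_of_le zero_le_one] at hu
      have hu' : u ∈ Icc (0:ℝ) 1 := ⟨le_of_lt hu.1, hu.2⟩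
      rw [Real.norm_eq_abs, abs_mul]
      calc |DDx (DDx (DDy (DDy Φ))) (u,v)| * |max (u-x) 0|
          ≤ M4 * 1 := by
            apply mul_le_mul ?_ (hmax1 hu' hx) (abs_nonneg _) ?_
            · simpa [Real.norm_eq_abs] using hM4 (u,v) (mk_mem_prod hu' hv)
            · exact le_trans (abs_nonneg _) (by simpa [Real.norm_eq_abs] using hM4 (u,v) (mk_mem_prod hu' hv))
        _ = M4 := mul_one _
  have i3 : IntervalIntegrable
      (fun v => (∫ u in (0:ℝ)..1, DDx (DDx (DDy (DDy Φ))) (u,v) * max (u-x) 0) * max (v-y) 0)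
      volume 0 1 := by
    have hg : AEStronglyMeasurable
        (fun v : ℝ => (∫ u in (0:ℝ)..1, DDx (DDx (DDy (DDy Φ))) (u,v) * max (u-x) 0)
          * max (v-y) 0) volume :=
      hinner_meas.mul (((continuous_id.sub continuous_const).max
        continuous_const).aestronglyMeasurable)
    apply intervalIntegrable_of_bounded (M := M4 * 1) (hm := hg)
    intro v hv
    show |_ * max (v-y) 0| ≤ M4 * 1
    rw [uIoc_of_le zero_le_one] at hv
    have hv' : v ∈ Icc (0:ℝ) 1 := ⟨le_of_lt hv.1, hv.2⟩
    rw [abs_mul]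
    apply mul_le_mul (hinner_bd v hv') (hmax1 hv' hy) (abs_nonneg _)
    exact le_trans (abs_nonneg _) (hinner_bd v hv')
  -- rewrite the v-integral using eC and split
  have hsplit : ∫ v in (0:ℝ)..1, DDy (DDy Φ) (x, v) * max (v - y) 0
      = (∫ v in (0:ℝ)..1, DDy (DDy Φ) (1,v) * max (v-y) 0)
        - (1-x) * (∫ v in (0:ℝ)..1, DDx (DDy (DDy Φ)) (1,v) * max (v-y) 0)
        + ∫ v in (0:ℝ)..1,
            (∫ u in (0:ℝ)..1, DDx (DDx (DDy (DDy Φ))) (u,v) * max (u-x) 0) * max (v-y) 0 := by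
    have hcongr : ∫ v in (0:ℝ)..1, DDy (DDy Φ) (x, v) * max (v - y) 0
        = ∫ v in (0:ℝ)..1,
            (DDy (DDy Φ) (1,v) * max (v-y) 0
              - (1-x) * (DDx (DDy (DDy Φ)) (1,v) * max (v-y) 0)
              + (∫ u in (0:ℝ)..1, DDx (DDx (DDy (DDy Φ))) (u,v) * max (u-x) 0) * max (v-y) 0) := by
      refine integral_congr ?_
      intro v hv
      rw [uIcc_of_le zero_le_one] at hv
      simp only
      rw [eC v hv]; ring
    rw [hcongr, integral_add (i1.sub i2) i3, integral_sub i1 i2,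
      intervalIntegral.integral_const_mul]
  rw [yexp, eA, eB, hsplit]
  ring
section Prob
variable {α : Type*} [MeasurableSpace α] {μ : Measure α} [IsProbabilityMeasure μ]

/-- integral of a two-sided indicator kernel over `ω`, swapped. -/
lemma layer_swap {Z w : α → ℝ} (hZ : Measurable Z) (hZ0 : ∀ ω, 0 ≤ Z ω)
    (hw : Measurable w) (hw1 : ∀ ω, |w ω| ≤ 1) {u : ℝ} (hu : 0 ≤ u) :
    (∫ s in (0:ℝ)..u, ∫ ω, (if Z ω ≤ s then (1:ℝ) else 0) * w ω ∂μ)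
      = ∫ ω, max (u - Z ω) 0 * w ω ∂μ := by
  have hmeas : AEStronglyMeasurable (fun p : α × ℝ => (if Z p.1 ≤ p.2 then (1:ℝ) else 0) * w p.1)
      (μ.prod (volume.restrict (Ioc 0 u))) := by
    refine (Measurable.aestronglyMeasurable ?_)
    refine Measurable.mul ?_ (hw.comp measurable_fst)
    refine Measurable.ite ?_ measurable_const measurable_const
    exact measurableSet_le (hZ.comp measurable_fst) measurable_snd
  have hbd : ∀ ω, ∀ s ∈ Ioc (0:ℝ) u, |(if Z ω ≤ s then (1:ℝ) else 0) * w ω| ≤ 1 := by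
    intro ω s _
    rw [abs_mul]
    rcases le_or_gt (Z ω) s with h | h
    · simp only [if_pos h, abs_one, one_mul]; exact hw1 ω
    · simp [if_neg (not_le.2 h)]
  rw [← swap_restrict hu hmeas hbd]
  refine integral_congr_ae (Filter.Eventually.of_forall fun ω => ?_)
  show (∫ s in (0:ℝ)..u, (if Z ω ≤ s then (1:ℝ) else 0) * w ω) = max (u - Z ω) 0 * w ω
  rw [intervalIntegral.integral_mul_const, integral_ite_le (hZ0 ω) hu]

lemma ite_and_mul (p q : Prop) [Decidable p] [Decidable q] :
    (if p ∧ q then (1:ℝ) else 0) = (if p then (1:ℝ) else 0) * (if q then (1:ℝ) else 0) := by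
  by_cases hp : p <;> by_cases hq : q <;> simp [hp, hq]

variable {X Y : α → ℝ} (hX : Measurable X) (hY : Measurable Y)
  (hX01 : ∀ ω, X ω ∈ Icc (0:ℝ) 1) (hY01 : ∀ ω, Y ω ∈ Icc (0:ℝ) 1)
  {Fz : ℝ → ℝ → ℝ}
  (hF : ∀ s t : ℝ, Fz s t = (μ {ω | X ω ≤ s ∧ Y ω ≤ t}).toReal)

include hX hY hX01 hY01 hF

lemma Fz_integral : ∀ s t : ℝ, Fz s t
    = ∫ ω, (if X ω ≤ s then (1:ℝ) else 0) * (if Y ω ≤ t then (1:ℝ) else 0) ∂μ := by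
  intro s t
  have hA : MeasurableSet {ω | X ω ≤ s ∧ Y ω ≤ t} :=
    (measurableSet_le hX measurable_const).inter (measurableSet_le hY measurable_const)
  rw [hF]
  have := integral_indicator_const (1:ℝ) hA (μ := μ)
  rw [smul_eq_mul, mul_one] at this
  rw [← measureReal_def, ← this]
  refine integral_congr_ae (Filter.Eventually.of_forall fun ω => ?_)
  show {ω | X ω ≤ s ∧ Y ω ≤ t}.indicator (fun _ => (1:ℝ)) ω
      = (if X ω ≤ s then (1:ℝ) else 0) * (if Y ω ≤ t then (1:ℝ) else 0)
  rw [← ite_and_mul]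
  simp [Set.indicator_apply, mem_setOf_eq]

/-- bivariate layer-cake -/
lemma K_eq {u v : ℝ} (hu : u ∈ Icc (0:ℝ) 1) (hv : v ∈ Icc (0:ℝ) 1) :
    (∫ s in (0:ℝ)..u, ∫ t in (0:ℝ)..v, Fz s t)
      = ∫ ω, max (u - X ω) 0 * max (v - Y ω) 0 ∂μ := by
  have hFzi := Fz_integral hX hY hX01 hY01 hF
  have step1 : ∀ s : ℝ, (∫ t in (0:ℝ)..v, Fz s t)
      = ∫ ω, (if X ω ≤ s then (1:ℝ) else 0) * max (v - Y ω) 0 ∂μ := by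
    intro s
    have h1 : (∫ t in (0:ℝ)..v, Fz s t)
        = ∫ t in (0:ℝ)..v, ∫ ω, (if Y ω ≤ t then (1:ℝ) else 0)
            * (if X ω ≤ s then (1:ℝ) else 0) ∂μ := by
      refine integral_congr fun t _ => ?_
      rw [hFzi s t]
      refine integral_congr_ae (Filter.Eventually.of_forall fun ω => ?_)
      ring
    rw [h1, layer_swap hY (fun ω => (hY01 ω).1)
      (Measurable.ite (measurableSet_le hX measurable_const) measurable_const measurable_const)
      (fun ω => by
        rcases le_or_gt (X ω) s with h | h
        · simp [h]
        · rw [if_neg (not_le.2 h)]; simp) hv.1]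
    refine integral_congr_ae (Filter.Eventually.of_forall fun ω => ?_)
    ring
  have h2 : (∫ s in (0:ℝ)..u, ∫ t in (0:ℝ)..v, Fz s t)
      = ∫ s in (0:ℝ)..u, ∫ ω, (if X ω ≤ s then (1:ℝ) else 0) * max (v - Y ω) 0 ∂μ :=
    integral_congr fun s _ => step1 s
  rw [h2, layer_swap (w := fun ω => max (v - Y ω) 0) hX (fun ω => (hX01 ω).1)
    ((measurable_const.sub hY).max measurable_const)
    (fun ω => by
      rw [abs_of_nonneg (le_max_right _ _)]
      exact max_le (by linarith [(hY01 ω).1, hv.2]) zero_le_one) hu.1]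

/-- marginal layer-cake in x -/
lemma KX_eq {u : ℝ} (hu : u ∈ Icc (0:ℝ) 1) :
    (∫ s in (0:ℝ)..u, Fz s 1) = ∫ ω, max (u - X ω) 0 ∂μ := by
  have hFzi := Fz_integral hX hY hX01 hY01 hF
  have h1 : (∫ s in (0:ℝ)..u, Fz s 1)
      = ∫ s in (0:ℝ)..u, ∫ ω, (if X ω ≤ s then (1:ℝ) else 0) * (1:ℝ) ∂μ := by
    refine integral_congr fun s _ => ?_
    rw [hFzi s 1]
    refine integral_congr_ae (Filter.Eventually.of_forall fun ω => ?_)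
    show (if X ω ≤ s then (1:ℝ) else 0) * (if Y ω ≤ 1 then (1:ℝ) else 0)
        = (if X ω ≤ s then (1:ℝ) else 0) * 1
    rw [if_pos (hY01 ω).2]
  rw [h1, layer_swap hX (fun ω => (hX01 ω).1) measurable_const (fun ω => by simp) hu.1]
  refine integral_congr_ae (Filter.Eventually.of_forall fun ω => ?_)
  show max (u - X ω) 0 * 1 = max (u - X ω) 0
  rw [mul_one]

/-- marginal layer-cake in y -/
lemma KY_eq {v : ℝ} (hv : v ∈ Icc (0:ℝ) 1) :
    (∫ t in (0:ℝ)..v, Fz 1 t) = ∫ ω, max (v - Y ω) 0 ∂μ := by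
  have hFzi := Fz_integral hX hY hX01 hY01 hF
  have h1 : (∫ t in (0:ℝ)..v, Fz 1 t)
      = ∫ t in (0:ℝ)..v, ∫ ω, (if Y ω ≤ t then (1:ℝ) else 0) * (1:ℝ) ∂μ := by
    refine integral_congr fun t _ => ?_
    rw [hFzi 1 t]
    refine integral_congr_ae (Filter.Eventually.of_forall fun ω => ?_)
    show (if X ω ≤ 1 then (1:ℝ) else 0) * (if Y ω ≤ t then (1:ℝ) else 0)
        = (if Y ω ≤ t then (1:ℝ) else 0) * 1
    rw [if_pos (hX01 ω).2]
    ring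
  rw [h1, layer_swap hY (fun ω => (hY01 ω).1) measurable_const (fun ω => by simp) hv.1]
  refine integral_congr_ae (Filter.Eventually.of_forall fun ω => ?_)
  show max (v - Y ω) 0 * 1 = max (v - Y ω) 0
  rw [mul_one]

end Prob
section ExpParam
variable {α : Type*} [MeasurableSpace α] {μ : Measure α} [IsProbabilityMeasure μ]

lemma exp_param {Z w : α → ℝ} (hZ : Measurable Z) (hZ01 : ∀ ω, Z ω ∈ Icc (0:ℝ) 1)
    (hw : Measurable w) (hw1 : ∀ ω, |w ω| ≤ 1)
    {c : ℝ → ℝ} (hc : Measurable c) {M : ℝ} (hM : ∀ u ∈ Ioc (0:ℝ) 1, |c u| ≤ M) :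
    ∫ ω, (∫ u in (0:ℝ)..1, c u * max (u - Z ω) 0) * w ω ∂μ
      = ∫ u in (0:ℝ)..1, c u * ∫ ω, max (u - Z ω) 0 * w ω ∂μ := by
  have h1 : ∀ ω, (∫ u in (0:ℝ)..1, c u * max (u - Z ω) 0) * w ω
      = ∫ u in (0:ℝ)..1, c u * max (u - Z ω) 0 * w ω :=
    fun ω => (intervalIntegral.integral_mul_const _ _).symm
  have hmeas : AEStronglyMeasurable (fun p : α × ℝ => c p.2 * max (p.2 - Z p.1) 0 * w p.1)
      (μ.prod (volume.restrict (Ioc 0 1))) :=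
    (((hc.comp measurable_snd).mul
      ((measurable_snd.sub (hZ.comp measurable_fst)).max measurable_const)).mul
      (hw.comp measurable_fst)).aestronglyMeasurable
  have hbd : ∀ ω, ∀ u ∈ Ioc (0:ℝ) 1, |c u * max (u - Z ω) 0 * w ω| ≤ M := by
    intro ω u hu
    have hM0 : 0 ≤ M := le_trans (abs_nonneg _) (hM u hu)
    have h2 : |max (u - Z ω) 0| ≤ 1 := by
      rw [abs_of_nonneg (le_max_right _ _)]
      exact max_le (by linarith [hu.2, (hZ01 ω).1]) zero_le_one
    rw [abs_mul, abs_mul]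
    calc |c u| * |max (u - Z ω) 0| * |w ω|
        ≤ M * 1 * 1 := by
          apply mul_le_mul (mul_le_mul (hM u hu) h2 (abs_nonneg _) hM0) (hw1 ω) (abs_nonneg _)
          positivity
      _ = M := by ring
  have hswap := swap_restrict (μ := μ) zero_le_one hmeas hbd
  simp only at hswap
  calc ∫ ω, (∫ u in (0:ℝ)..1, c u * max (u - Z ω) 0) * w ω ∂μ
      = ∫ ω, (∫ u in (0:ℝ)..1, c u * max (u - Z ω) 0 * w ω) ∂μ :=
        integral_congr_ae (Filter.Eventually.of_forall fun ω => h1 ω)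
    _ = ∫ u in (0:ℝ)..1, ∫ ω, c u * max (u - Z ω) 0 * w ω ∂μ := hswap
    _ = ∫ u in (0:ℝ)..1, c u * ∫ ω, max (u - Z ω) 0 * w ω ∂μ := by
        refine integral_congr fun u _ => ?_
        rw [← MeasureTheory.integral_const_mul]
        refine integral_congr_ae (Filter.Eventually.of_forall fun ω => ?_)
        show c u * max (u - Z ω) 0 * w ω = c u * (max (u - Z ω) 0 * w ω)
        ring

lemma exp_param2 {X Y : α → ℝ} (hX : Measurable X) (hY : Measurable Y)
    (hX01 : ∀ ω, X ω ∈ Icc (0:ℝ) 1) (hY01 : ∀ ω, Y ω ∈ Icc (0:ℝ) 1)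
    {c : ℝ → ℝ → ℝ} (hc : Measurable fun p : ℝ × ℝ => c p.1 p.2)
    {M : ℝ} (hM : ∀ u ∈ Ioc (0:ℝ) 1, ∀ v ∈ Icc (0:ℝ) 1, |c u v| ≤ M) :
    ∫ ω, (∫ v in (0:ℝ)..1, (∫ u in (0:ℝ)..1, c u v * max (u - X ω) 0) * max (v - Y ω) 0) ∂μ
      = ∫ v in (0:ℝ)..1, ∫ u in (0:ℝ)..1,
          c u v * ∫ ω, max (u - X ω) 0 * max (v - Y ω) 0 ∂μ := by
  have hM0 : 0 ≤ M := le_trans (abs_nonneg _) (hM 1 (by norm_num) 1 (by norm_num))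
  have hinner_meas : AEStronglyMeasurable
      (fun p : α × ℝ => (∫ u in (0:ℝ)..1, c u p.2 * max (u - X p.1) 0) * max (p.2 - Y p.1) 0)
      (μ.prod (volume.restrict (Ioc 0 1))) := by
    have hrw : (fun p : α × ℝ => (∫ u in (0:ℝ)..1, c u p.2 * max (u - X p.1) 0))
        = fun p : α × ℝ => ∫ u, c u p.2 * max (u - X p.1) 0 ∂(volume.restrict (Ioc 0 1)) := by
      funext p; exact integral_of_le zero_le_one
    have hm : Measurable fun q : (α × ℝ) × ℝ => c q.2 q.1.2 * max (q.2 - X q.1.1) 0 :=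
      ((hc.comp (measurable_snd.prodMk (measurable_fst.snd))).mul
        ((measurable_snd.sub (hX.comp measurable_fst.fst)).max measurable_const))
    refine AEStronglyMeasurable.mul ?_ ?_
    · rw [hrw]
      exact (hm.stronglyMeasurable.integral_prod_right').aestronglyMeasurable
    · exact ((measurable_snd.sub (hY.comp measurable_fst)).max
        measurable_const).aestronglyMeasurable
  have hmax1 : ∀ {w z : ℝ}, w ≤ 1 → 0 ≤ z → |max (w - z) 0| ≤ 1 := by
    intro w z hw hz
    rw [abs_of_nonneg (le_max_right _ _)]
    exact max_le (by linarith) zero_le_one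
  have hinner_bd : ∀ ω, ∀ v ∈ Icc (0:ℝ) 1,
      |∫ u in (0:ℝ)..1, c u v * max (u - X ω) 0| ≤ M := by
    intro ω v hv
    have hb := intervalIntegral.norm_integral_le_of_norm_le_const
      (C := M) (f := fun u => c u v * max (u - X ω) 0) (a := (0:ℝ)) (b := 1) ?_
    · simpa [Real.norm_eq_abs] using hb
    · intro u hu
      rw [uIoc_of_le zero_le_one] at hu
      rw [Real.norm_eq_abs, abs_mul]
      calc |c u v| * |max (u - X ω) 0| ≤ M * 1 :=
            mul_le_mul (hM u hu v hv) (hmax1 hu.2 (hX01 ω).1) (abs_nonneg _) hM0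
        _ = M := mul_one _
  have hbd : ∀ ω, ∀ v ∈ Ioc (0:ℝ) 1,
      |(∫ u in (0:ℝ)..1, c u v * max (u - X ω) 0) * max (v - Y ω) 0| ≤ M := by
    intro ω v hv
    rw [abs_mul]
    calc |∫ u in (0:ℝ)..1, c u v * max (u - X ω) 0| * |max (v - Y ω) 0| ≤ M * 1 :=
          mul_le_mul (hinner_bd ω v ⟨le_of_lt hv.1, hv.2⟩) (hmax1 hv.2 (hY01 ω).1)
            (abs_nonneg _) hM0
      _ = M := mul_one _
  have hswap := swap_restrict (μ := μ) zero_le_one hinner_meas hbd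
  simp only at hswap
  rw [hswap]
  refine integral_congr fun v hv => ?_
  rw [uIcc_of_le zero_le_one] at hv
  have := exp_param (μ := μ) hX hX01 ((measurable_const.sub hY).max measurable_const)
    (fun ω => hmax1 hv.2 (hY01 ω).1) (c := fun u => c u v)
    (hc.comp (measurable_id.prodMk measurable_const)) (M := M)
    (fun u hu => hM u hu v hv)
  simpa using this
end ExpParam
section ParamHelpers
variable {α : Type*} [MeasurableSpace α]

lemma param1_SM {X : α → ℝ} (hX : Measurable X) {c : ℝ → ℝ} (hc : Measurable c) :
    StronglyMeasurable fun ω => ∫ u in (0:ℝ)..1, c u * max (u - X ω) 0 := by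
  have hrw : (fun ω => ∫ u in (0:ℝ)..1, c u * max (u - X ω) 0)
      = fun ω => ∫ u, c u * max (u - X ω) 0 ∂(volume.restrict (Ioc 0 1)) := by
    funext ω; exact integral_of_le zero_le_one
  rw [hrw]
  exact (((hc.comp measurable_snd).mul
    ((measurable_snd.sub (hX.comp measurable_fst)).max measurable_const)).stronglyMeasurable).integral_prod_right'

lemma param1_bound {c : ℝ → ℝ} {M : ℝ} (hM : ∀ u ∈ Ioc (0:ℝ) 1, |c u| ≤ M) {z : ℝ}
    (hz : 0 ≤ z) : |∫ u in (0:ℝ)..1, c u * max (u - z) 0| ≤ M := by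
  have hM0 : 0 ≤ M := le_trans (abs_nonneg _) (hM 1 (by norm_num))
  have hb := intervalIntegral.norm_integral_le_of_norm_le_const
    (C := M) (f := fun u => c u * max (u - z) 0) (a := (0:ℝ)) (b := 1) ?_
  · simpa [Real.norm_eq_abs] using hb
  · intro u hu
    rw [uIoc_of_le zero_le_one] at hu
    rw [Real.norm_eq_abs, abs_mul]
    have h2 : |max (u - z) 0| ≤ 1 := by
      rw [abs_of_nonneg (le_max_right _ _)]
      exact max_le (by linarith [hu.2]) zero_le_one
    calc |c u| * |max (u - z) 0| ≤ M * 1 := mul_le_mul (hM u hu) h2 (abs_nonneg _) hM0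
      _ = M := mul_one _

lemma param2_SM {X Y : α → ℝ} (hX : Measurable X) (hY : Measurable Y)
    {c : ℝ → ℝ → ℝ} (hc : Measurable fun p : ℝ × ℝ => c p.1 p.2) :
    StronglyMeasurable fun ω =>
      ∫ v in (0:ℝ)..1, (∫ u in (0:ℝ)..1, c u v * max (u - X ω) 0) * max (v - Y ω) 0 := by
  have hrw : (fun ω =>
      ∫ v in (0:ℝ)..1, (∫ u in (0:ℝ)..1, c u v * max (u - X ω) 0) * max (v - Y ω) 0)
      = fun ω => ∫ v, (∫ u, c u v * max (u - X ω) 0 ∂(volume.restrict (Ioc 0 1)))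
          * max (v - Y ω) 0 ∂(volume.restrict (Ioc 0 1)) := by
    funext ω
    rw [integral_of_le zero_le_one]
    refine setIntegral_congr_fun measurableSet_Ioc (fun v _ => ?_)
    rw [integral_of_le zero_le_one]
  rw [hrw]
  have hmG : StronglyMeasurable fun p : α × ℝ =>
      (∫ u, c u p.2 * max (u - X p.1) 0 ∂(volume.restrict (Ioc 0 1))) * max (p.2 - Y p.1) 0 := by
    have hm : Measurable fun q : (α × ℝ) × ℝ => c q.2 q.1.2 * max (q.2 - X q.1.1) 0 :=
      (hc.comp (measurable_snd.prodMk (measurable_fst.snd))).mul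
        ((measurable_snd.sub (hX.comp measurable_fst.fst)).max measurable_const)
    exact (hm.stronglyMeasurable.integral_prod_right').mul
      (((measurable_snd.sub (hY.comp measurable_fst)).max measurable_const).stronglyMeasurable)
  exact hmG.integral_prod_right'

lemma param2_bound {c : ℝ → ℝ → ℝ} {M : ℝ}
    (hM : ∀ u ∈ Ioc (0:ℝ) 1, ∀ v ∈ Icc (0:ℝ) 1, |c u v| ≤ M) {x y : ℝ}
    (hx : 0 ≤ x) (hy : 0 ≤ y) :
    |∫ v in (0:ℝ)..1, (∫ u in (0:ℝ)..1, c u v * max (u - x) 0) * max (v - y) 0| ≤ M := by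
  have hM0 : 0 ≤ M := le_trans (abs_nonneg _) (hM 1 (by norm_num) 1 (by norm_num))
  have hb := intervalIntegral.norm_integral_le_of_norm_le_const
    (C := M) (f := fun v => (∫ u in (0:ℝ)..1, c u v * max (u - x) 0) * max (v - y) 0)
    (a := (0:ℝ)) (b := 1) ?_
  · simpa [Real.norm_eq_abs] using hb
  · intro v hv
    rw [uIoc_of_le zero_le_one] at hv
    rw [Real.norm_eq_abs, abs_mul]
    have h2 : |max (v - y) 0| ≤ 1 := by
      rw [abs_of_nonneg (le_max_right _ _)]
      exact max_le (by linarith [hv.2]) zero_le_one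
    have h1 : |∫ u in (0:ℝ)..1, c u v * max (u - x) 0| ≤ M :=
      param1_bound (fun u hu => hM u hu v ⟨le_of_lt hv.1, hv.2⟩) hx
    calc |∫ u in (0:ℝ)..1, c u v * max (u - x) 0| * |max (v - y) 0|
        ≤ M * 1 := mul_le_mul h1 h2 (abs_nonneg _) hM0
      _ = M := mul_one _

end ParamHelpers
section ExpFormula
variable {α : Type*} [MeasurableSpace α] {μ : Measure α} [IsProbabilityMeasure μ]

lemma expectation_formula {Φ : ℝ × ℝ → ℝ} {U : Set (ℝ × ℝ)} (hU : IsOpen U)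
    (hsub : Icc (0:ℝ) 1 ×ˢ Icc (0:ℝ) 1 ⊆ U) (hΦ : ContDiffOn ℝ 4 Φ U)
    {X Y : α → ℝ} (hX : Measurable X) (hY : Measurable Y)
    (hX01 : ∀ ω, X ω ∈ Icc (0:ℝ) 1) (hY01 : ∀ ω, Y ω ∈ Icc (0:ℝ) 1) :
    ∫ ω, Φ (X ω, Y ω) ∂μ
      = Φ (1,1)
        - DDx Φ (1,1) * (∫ ω, max (1 - X ω) 0 ∂μ)
        + (∫ u in (0:ℝ)..1, DDx (DDx Φ) (u,1) * ∫ ω, max (u - X ω) 0 ∂μ)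
        - DDy Φ (1,1) * (∫ ω, max (1 - Y ω) 0 ∂μ)
        + DDx (DDy Φ) (1,1) * (∫ ω, max (1 - X ω) 0 * max (1 - Y ω) 0 ∂μ)
        - (∫ u in (0:ℝ)..1, DDx (DDx (DDy Φ)) (u,1)
            * ∫ ω, max (u - X ω) 0 * max (1 - Y ω) 0 ∂μ)
        + (∫ v in (0:ℝ)..1, DDy (DDy Φ) (1,v) * ∫ ω, max (v - Y ω) 0 ∂μ)
        - (∫ v in (0:ℝ)..1, DDx (DDy (DDy Φ)) (1,v)
            * ∫ ω, max (1 - X ω) 0 * max (v - Y ω) 0 ∂μ)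
        + ∫ v in (0:ℝ)..1, ∫ u in (0:ℝ)..1,
            DDx (DDx (DDy (DDy Φ))) (u,v) * ∫ ω, max (u - X ω) 0 * max (v - Y ω) 0 ∂μ := by
  -- smoothness
  have hΦ2 : ContDiffOn ℝ 3 (DDy Φ) U := DDy_contDiffOn hΦ hU (by norm_num)
  have hΦ22 : ContDiffOn ℝ 2 (DDy (DDy Φ)) U := DDy_contDiffOn hΦ2 hU (by norm_num)
  have hΦ122 : ContDiffOn ℝ 1 (DDx (DDy (DDy Φ))) U := DDx_contDiffOn hΦ22 hU (by norm_num)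
  have hΦ1122 : ContDiffOn ℝ 0 (DDx (DDx (DDy (DDy Φ)))) U := DDx_contDiffOn hΦ122 hU (by norm_num)
  have hΦ12 : ContDiffOn ℝ 2 (DDx (DDy Φ)) U := DDx_contDiffOn hΦ2 hU (by norm_num)
  have hΦ112 : ContDiffOn ℝ 1 (DDx (DDx (DDy Φ))) U := DDx_contDiffOn hΦ12 hU (by norm_num)
  have hΦ1 : ContDiffOn ℝ 3 (DDx Φ) U := DDx_contDiffOn hΦ hU (by norm_num)
  have hΦ11 : ContDiffOn ℝ 2 (DDx (DDx Φ)) U := DDx_contDiffOn hΦ1 hU (by norm_num)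
  -- bounds
  have bnd : ∀ g : ℝ × ℝ → ℝ, ContinuousOn g U →
      ∃ M, ∀ q ∈ Icc (0:ℝ) 1 ×ˢ Icc (0:ℝ) 1, |g q| ≤ M := by
    intro g hg
    obtain ⟨M, hM⟩ := (isCompact_Icc.prod isCompact_Icc).exists_bound_of_continuousOn
      (hg.mono hsub)
    exact ⟨M, fun q hq => by simpa [Real.norm_eq_abs] using hM q hq⟩
  obtain ⟨M11, hM11⟩ := bnd _ hΦ11.continuousOn
  obtain ⟨M112, hM112⟩ := bnd _ hΦ112.continuousOn
  obtain ⟨M22, hM22⟩ := bnd _ hΦ22.continuousOn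
  obtain ⟨M122, hM122⟩ := bnd _ hΦ122.continuousOn
  obtain ⟨M1122, hM1122⟩ := bnd _ hΦ1122.continuousOn
  -- one dimensional slice coefficients: measurability and bounds
  have hc11 : Measurable fun u : ℝ => DDx (DDx Φ) (u,1) :=
    (DDx_measurable _).comp (measurable_id.prodMk measurable_const)
  have hc112 : Measurable fun u : ℝ => DDx (DDx (DDy Φ)) (u,1) :=
    (DDx_measurable _).comp (measurable_id.prodMk measurable_const)
  have hc22 : Measurable fun v : ℝ => DDy (DDy Φ) (1,v) :=
    (DDy_measurable _).comp (measurable_const.prodMk measurable_id)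
  have hc122 : Measurable fun v : ℝ => DDx (DDy (DDy Φ)) (1,v) :=
    (DDx_measurable _).comp (measurable_const.prodMk measurable_id)
  have hc1122 : Measurable fun p : ℝ × ℝ => DDx (DDx (DDy (DDy Φ))) (p.1, p.2) :=
    (DDx_measurable _).comp (measurable_fst.prodMk measurable_snd)
  have memx : ∀ {u : ℝ}, u ∈ Ioc (0:ℝ) 1 → ((u,(1:ℝ)) ∈ Icc (0:ℝ) 1 ×ˢ Icc (0:ℝ) 1) :=
    fun hu => mk_mem_prod ⟨le_of_lt hu.1, hu.2⟩ (by norm_num)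
  have memy : ∀ {v : ℝ}, v ∈ Ioc (0:ℝ) 1 → (((1:ℝ),v) ∈ Icc (0:ℝ) 1 ×ˢ Icc (0:ℝ) 1) :=
    fun hv => mk_mem_prod (by norm_num) ⟨le_of_lt hv.1, hv.2⟩
  have hc11bd : ∀ u ∈ Ioc (0:ℝ) 1, |DDx (DDx Φ) (u,1)| ≤ M11 := fun u hu => hM11 _ (memx hu)
  have hc112bd : ∀ u ∈ Ioc (0:ℝ) 1, |DDx (DDx (DDy Φ)) (u,1)| ≤ M112 :=
    fun u hu => hM112 _ (memx hu)
  have hc22bd : ∀ v ∈ Ioc (0:ℝ) 1, |DDy (DDy Φ) (1,v)| ≤ M22 := fun v hv => hM22 _ (memy hv)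
  have hc122bd : ∀ v ∈ Ioc (0:ℝ) 1, |DDx (DDy (DDy Φ)) (1,v)| ≤ M122 :=
    fun v hv => hM122 _ (memy hv)
  have hc1122bd : ∀ u ∈ Ioc (0:ℝ) 1, ∀ v ∈ Icc (0:ℝ) 1,
      |DDx (DDx (DDy (DDy Φ))) (u,v)| ≤ M1122 :=
    fun u hu v hv => hM1122 _ (mk_mem_prod ⟨le_of_lt hu.1, hu.2⟩ hv)
  -- range facts
  have habX : ∀ ω, |1 - X ω| ≤ 1 :=
    fun ω => abs_le.2 ⟨by linarith [(hX01 ω).2], by linarith [(hX01 ω).1]⟩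
  have habY : ∀ ω, |1 - Y ω| ≤ 1 :=
    fun ω => abs_le.2 ⟨by linarith [(hY01 ω).2], by linarith [(hY01 ω).1]⟩
  have hmaxX : ∀ ω, (1 - X ω) = max (1 - X ω) 0 :=
    fun ω => (max_eq_left (by linarith [(hX01 ω).2])).symm
  have hmaxY : ∀ ω, (1 - Y ω) = max (1 - Y ω) 0 :=
    fun ω => (max_eq_left (by linarith [(hY01 ω).2])).symm
  -- pointwise master identity, flattened
  have key : ∫ ω, Φ (X ω, Y ω) ∂μ = ∫ ω, (Φ (1,1)
      - (1 - X ω) * DDx Φ (1,1)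
      + (∫ u in (0:ℝ)..1, DDx (DDx Φ) (u,1) * max (u - X ω) 0)
      - DDy Φ (1,1) * (1 - Y ω)
      + DDx (DDy Φ) (1,1) * ((1 - X ω) * (1 - Y ω))
      - (∫ u in (0:ℝ)..1, DDx (DDx (DDy Φ)) (u,1) * max (u - X ω) 0) * (1 - Y ω)
      + (∫ v in (0:ℝ)..1, DDy (DDy Φ) (1,v) * max (v - Y ω) 0)
      - (∫ v in (0:ℝ)..1, DDx (DDy (DDy Φ)) (1,v) * max (v - Y ω) 0) * (1 - X ω)
      + ∫ v in (0:ℝ)..1, (∫ u in (0:ℝ)..1, DDx (DDx (DDy (DDy Φ))) (u,v) * max (u - X ω) 0)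
          * max (v - Y ω) 0) ∂μ := by
    refine integral_congr_ae (Filter.Eventually.of_forall fun ω => ?_)
    have := master_identity hU hsub hΦ (hX01 ω) (hY01 ω)
    simp only at this ⊢
    rw [this]; ring
  -- integrability of the pieces
  have iP2 : Integrable (fun ω => (1 - X ω) * DDx Φ (1,1)) μ :=
    integrable_of_bounded_fin ((measurable_const.sub hX).mul_const _).aestronglyMeasurable
      (M := |DDx Φ (1,1)|) (fun ω => by
        rw [abs_mul]
        exact mul_le_mul_of_nonneg_right (habX ω) (abs_nonneg _) |>.trans (by rw [one_mul]))
  have iP3 : Integrable (fun ω => ∫ u in (0:ℝ)..1, DDx (DDx Φ) (u,1) * max (u - X ω) 0) μ :=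
    integrable_of_bounded_fin (param1_SM hX hc11).aestronglyMeasurable
      (fun ω => param1_bound hc11bd (hX01 ω).1)
  have iP4a : Integrable (fun ω => DDy Φ (1,1) * (1 - Y ω)) μ :=
    integrable_of_bounded_fin (measurable_const.mul (measurable_const.sub hY)).aestronglyMeasurable
      (M := |DDy Φ (1,1)|) (fun ω => by
        rw [abs_mul]
        exact mul_le_mul_of_nonneg_left (habY ω) (abs_nonneg _) |>.trans (by rw [mul_one]))
  have iP4b : Integrable (fun ω => DDx (DDy Φ) (1,1) * ((1 - X ω) * (1 - Y ω))) μ :=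
    integrable_of_bounded_fin (measurable_const.mul
      ((measurable_const.sub hX).mul (measurable_const.sub hY))).aestronglyMeasurable
      (M := |DDx (DDy Φ) (1,1)|) (fun ω => by
        rw [abs_mul, abs_mul]
        calc |DDx (DDy Φ) (1,1)| * (|1 - X ω| * |1 - Y ω|)
            ≤ |DDx (DDy Φ) (1,1)| * (1 * 1) := by
              apply mul_le_mul_of_nonneg_left ?_ (abs_nonneg _)
              exact mul_le_mul (habX ω) (habY ω) (abs_nonneg _) zero_le_one
          _ = |DDx (DDy Φ) (1,1)| := by ring)
  have iP4c : Integrable (fun ω =>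
      (∫ u in (0:ℝ)..1, DDx (DDx (DDy Φ)) (u,1) * max (u - X ω) 0) * (1 - Y ω)) μ := by
    refine integrable_of_bounded_fin
      (((param1_SM hX hc112).measurable.mul (measurable_const.sub hY)).aestronglyMeasurable)
      (M := M112 * 1) (fun ω => ?_)
    rw [abs_mul]
    exact mul_le_mul (param1_bound hc112bd (hX01 ω).1) (habY ω) (abs_nonneg _)
      (le_trans (abs_nonneg _) (param1_bound hc112bd (hX01 ω).1))
  have iP5 : Integrable (fun ω => ∫ v in (0:ℝ)..1, DDy (DDy Φ) (1,v) * max (v - Y ω) 0) μ :=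
    integrable_of_bounded_fin (param1_SM hY hc22).aestronglyMeasurable
      (fun ω => param1_bound hc22bd (hY01 ω).1)
  have iP6 : Integrable (fun ω =>
      (∫ v in (0:ℝ)..1, DDx (DDy (DDy Φ)) (1,v) * max (v - Y ω) 0) * (1 - X ω)) μ := by
    refine integrable_of_bounded_fin
      (((param1_SM hY hc122).measurable.mul (measurable_const.sub hX)).aestronglyMeasurable)
      (M := M122 * 1) (fun ω => ?_)
    rw [abs_mul]
    exact mul_le_mul (param1_bound hc122bd (hY01 ω).1) (habX ω) (abs_nonneg _)
      (le_trans (abs_nonneg _) (param1_bound hc122bd (hY01 ω).1))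
  have iP7 : Integrable (fun ω => ∫ v in (0:ℝ)..1,
      (∫ u in (0:ℝ)..1, DDx (DDx (DDy (DDy Φ))) (u,v) * max (u - X ω) 0)
        * max (v - Y ω) 0) μ :=
    integrable_of_bounded_fin (param2_SM hX hY hc1122).aestronglyMeasurable
      (fun ω => param2_bound hc1122bd (hX01 ω).1 (hY01 ω).1)
  -- split the integral
  have i2' : Integrable (fun ω => Φ (1,1) - (1 - X ω) * DDx Φ (1,1)) μ := by
    exact (integrable_const _).sub iP2
  have i3' : Integrable (fun ω => Φ (1,1) - (1 - X ω) * DDx Φ (1,1)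
      + (∫ u in (0:ℝ)..1, DDx (DDx Φ) (u,1) * max (u - X ω) 0)) μ := by
    exact i2'.add iP3
  have i4' : Integrable (fun ω => Φ (1,1) - (1 - X ω) * DDx Φ (1,1)
      + (∫ u in (0:ℝ)..1, DDx (DDx Φ) (u,1) * max (u - X ω) 0)
      - DDy Φ (1,1) * (1 - Y ω)) μ := by
    exact i3'.sub iP4a
  have i5' : Integrable (fun ω => Φ (1,1) - (1 - X ω) * DDx Φ (1,1)
      + (∫ u in (0:ℝ)..1, DDx (DDx Φ) (u,1) * max (u - X ω) 0)
      - DDy Φ (1,1) * (1 - Y ω)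
      + DDx (DDy Φ) (1,1) * ((1 - X ω) * (1 - Y ω))) μ := by
    exact i4'.add iP4b
  have i6' : Integrable (fun ω => Φ (1,1) - (1 - X ω) * DDx Φ (1,1)
      + (∫ u in (0:ℝ)..1, DDx (DDx Φ) (u,1) * max (u - X ω) 0)
      - DDy Φ (1,1) * (1 - Y ω)
      + DDx (DDy Φ) (1,1) * ((1 - X ω) * (1 - Y ω))
      - (∫ u in (0:ℝ)..1, DDx (DDx (DDy Φ)) (u,1) * max (u - X ω) 0) * (1 - Y ω)) μ := by
    exact i5'.sub iP4c
  have i7' : Integrable (fun ω => Φ (1,1) - (1 - X ω) * DDx Φ (1,1)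
      + (∫ u in (0:ℝ)..1, DDx (DDx Φ) (u,1) * max (u - X ω) 0)
      - DDy Φ (1,1) * (1 - Y ω)
      + DDx (DDy Φ) (1,1) * ((1 - X ω) * (1 - Y ω))
      - (∫ u in (0:ℝ)..1, DDx (DDx (DDy Φ)) (u,1) * max (u - X ω) 0) * (1 - Y ω)
      + (∫ v in (0:ℝ)..1, DDy (DDy Φ) (1,v) * max (v - Y ω) 0)) μ := by
    exact i6'.add iP5
  have i8' : Integrable (fun ω => Φ (1,1) - (1 - X ω) * DDx Φ (1,1)
      + (∫ u in (0:ℝ)..1, DDx (DDx Φ) (u,1) * max (u - X ω) 0)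
      - DDy Φ (1,1) * (1 - Y ω)
      + DDx (DDy Φ) (1,1) * ((1 - X ω) * (1 - Y ω))
      - (∫ u in (0:ℝ)..1, DDx (DDx (DDy Φ)) (u,1) * max (u - X ω) 0) * (1 - Y ω)
      + (∫ v in (0:ℝ)..1, DDy (DDy Φ) (1,v) * max (v - Y ω) 0)
      - (∫ v in (0:ℝ)..1, DDx (DDy (DDy Φ)) (1,v) * max (v - Y ω) 0) * (1 - X ω)) μ := by
    exact i7'.sub iP6
  rw [key, integral_add i8' iP7, integral_sub i7' iP6, integral_add i6' iP5,
    integral_sub i5' iP4c, integral_add i4' iP4b, integral_sub i3' iP4a,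
    integral_add i2' iP3, integral_sub (integrable_const _) iP2, MeasureTheory.integral_const,
    probReal_univ, one_smul]
  -- evaluate the eight expectations
  have eval2 : ∫ ω, (1 - X ω) * DDx Φ (1,1) ∂μ
      = DDx Φ (1,1) * ∫ ω, max (1 - X ω) 0 ∂μ := by
    rw [← MeasureTheory.integral_const_mul]
    refine integral_congr_ae (Filter.Eventually.of_forall fun ω => ?_)
    show (1 - X ω) * DDx Φ (1,1) = DDx Φ (1,1) * max (1 - X ω) 0
    rw [← hmaxX ω]; ring
  have eval3 : ∫ ω, (∫ u in (0:ℝ)..1, DDx (DDx Φ) (u,1) * max (u - X ω) 0) ∂μ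
      = ∫ u in (0:ℝ)..1, DDx (DDx Φ) (u,1) * ∫ ω, max (u - X ω) 0 ∂μ := by
    have h := exp_param (μ := μ) hX hX01 (w := fun _ => (1:ℝ)) measurable_const
      (fun ω => by norm_num) hc11 hc11bd
    simp only [mul_one] at h
    exact h
  have eval4a : ∫ ω, DDy Φ (1,1) * (1 - Y ω) ∂μ
      = DDy Φ (1,1) * ∫ ω, max (1 - Y ω) 0 ∂μ := by
    rw [← MeasureTheory.integral_const_mul]
    refine integral_congr_ae (Filter.Eventually.of_forall fun ω => ?_)
    show DDy Φ (1,1) * (1 - Y ω) = DDy Φ (1,1) * max (1 - Y ω) 0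
    rw [← hmaxY ω]
  have eval4b : ∫ ω, DDx (DDy Φ) (1,1) * ((1 - X ω) * (1 - Y ω)) ∂μ
      = DDx (DDy Φ) (1,1) * ∫ ω, max (1 - X ω) 0 * max (1 - Y ω) 0 ∂μ := by
    rw [← MeasureTheory.integral_const_mul]
    refine integral_congr_ae (Filter.Eventually.of_forall fun ω => ?_)
    show DDx (DDy Φ) (1,1) * ((1 - X ω) * (1 - Y ω))
        = DDx (DDy Φ) (1,1) * (max (1 - X ω) 0 * max (1 - Y ω) 0)
    rw [← hmaxX ω, ← hmaxY ω]
  have eval4c : ∫ ω, (∫ u in (0:ℝ)..1, DDx (DDx (DDy Φ)) (u,1) * max (u - X ω) 0)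
        * (1 - Y ω) ∂μ
      = ∫ u in (0:ℝ)..1, DDx (DDx (DDy Φ)) (u,1)
          * ∫ ω, max (u - X ω) 0 * max (1 - Y ω) 0 ∂μ := by
    have h := exp_param (μ := μ) hX hX01 (w := fun ω => 1 - Y ω)
      (measurable_const.sub hY) habY hc112 hc112bd
    rw [h]
    refine integral_congr fun u _ => ?_
    show DDx (DDx (DDy Φ)) (u,1) * (∫ ω, max (u - X ω) 0 * (1 - Y ω) ∂μ)
        = DDx (DDx (DDy Φ)) (u,1) * ∫ ω, max (u - X ω) 0 * max (1 - Y ω) 0 ∂μ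
    congr 1
    refine integral_congr_ae (Filter.Eventually.of_forall fun ω => ?_)
    show max (u - X ω) 0 * (1 - Y ω) = max (u - X ω) 0 * max (1 - Y ω) 0
    rw [← hmaxY ω]
  have eval5 : ∫ ω, (∫ v in (0:ℝ)..1, DDy (DDy Φ) (1,v) * max (v - Y ω) 0) ∂μ
      = ∫ v in (0:ℝ)..1, DDy (DDy Φ) (1,v) * ∫ ω, max (v - Y ω) 0 ∂μ := by
    have h := exp_param (μ := μ) hY hY01 (w := fun _ => (1:ℝ)) measurable_const
      (fun ω => by norm_num) hc22 hc22bd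
    simp only [mul_one] at h
    exact h
  have eval6 : ∫ ω, (∫ v in (0:ℝ)..1, DDx (DDy (DDy Φ)) (1,v) * max (v - Y ω) 0)
        * (1 - X ω) ∂μ
      = ∫ v in (0:ℝ)..1, DDx (DDy (DDy Φ)) (1,v)
          * ∫ ω, max (1 - X ω) 0 * max (v - Y ω) 0 ∂μ := by
    have h := exp_param (μ := μ) hY hY01 (w := fun ω => 1 - X ω)
      (measurable_const.sub hX) habX hc122 hc122bd
    rw [h]
    refine integral_congr fun v _ => ?_
    show DDx (DDy (DDy Φ)) (1,v) * (∫ ω, max (v - Y ω) 0 * (1 - X ω) ∂μ)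
        = DDx (DDy (DDy Φ)) (1,v) * ∫ ω, max (1 - X ω) 0 * max (v - Y ω) 0 ∂μ
    congr 1
    refine integral_congr_ae (Filter.Eventually.of_forall fun ω => ?_)
    show max (v - Y ω) 0 * (1 - X ω) = max (1 - X ω) 0 * max (v - Y ω) 0
    rw [← hmaxX ω]; ring
  have eval7 := exp_param2 (μ := μ) hX hY hX01 hY01 hc1122 hc1122bd
  rw [eval2, eval3, eval4a, eval4b, eval4c, eval5, eval6, eval7]

end ExpFormula
section KHelpers
variable {α : Type*} [MeasurableSpace α] {μ : Measure α} [IsProbabilityMeasure μ]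

lemma K1_SM {Z : α → ℝ} (hZ : Measurable Z) :
    StronglyMeasurable fun u : ℝ => ∫ ω, max (u - Z ω) 0 ∂μ :=
  (((measurable_fst.sub (hZ.comp measurable_snd)).max
    measurable_const).stronglyMeasurable).integral_prod_right'

lemma K2_SM {X Y : α → ℝ} (hX : Measurable X) (hY : Measurable Y) :
    StronglyMeasurable fun p : ℝ × ℝ => ∫ ω, max (p.1 - X ω) 0 * max (p.2 - Y ω) 0 ∂μ :=
  ((((measurable_fst.fst.sub (hX.comp measurable_snd)).max measurable_const).mul
    ((measurable_fst.snd.sub (hY.comp measurable_snd)).max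
      measurable_const)).stronglyMeasurable).integral_prod_right'

lemma K1_bd {Z : α → ℝ} (hZ : Measurable Z) (hZ01 : ∀ ω, Z ω ∈ Icc (0:ℝ) 1)
    {u : ℝ} (hu : u ≤ 1) : |∫ ω, max (u - Z ω) 0 ∂μ| ≤ 1 := by
  have hb : ∀ ω, |max (u - Z ω) 0| ≤ 1 := fun ω => by
    rw [abs_of_nonneg (le_max_right _ _)]
    exact max_le (by linarith [(hZ01 ω).1]) zero_le_one
  have h0 : ‖∫ ω, max (u - Z ω) 0 ∂μ‖ ≤ ∫ ω, ‖max (u - Z ω) 0‖ ∂μ :=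
    MeasureTheory.norm_integral_le_integral_norm _
  simp only [Real.norm_eq_abs] at h0
  calc |∫ ω, max (u - Z ω) 0 ∂μ| ≤ ∫ ω, |max (u - Z ω) 0| ∂μ := h0
    _ ≤ ∫ _, (1:ℝ) ∂μ := by
        refine integral_mono ?_ (integrable_const 1) (fun ω => hb ω)
        exact integrable_of_bounded_fin
          (((measurable_const.sub hZ).max measurable_const).abs).aestronglyMeasurable
          (fun ω => by rw [abs_abs]; exact hb ω)
    _ = 1 := by simp

lemma K2_bd {X Y : α → ℝ} (hX : Measurable X) (hY : Measurable Y)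
    (hX01 : ∀ ω, X ω ∈ Icc (0:ℝ) 1) (hY01 : ∀ ω, Y ω ∈ Icc (0:ℝ) 1)
    {u v : ℝ} (hu : u ≤ 1) (hv : v ≤ 1) :
    |∫ ω, max (u - X ω) 0 * max (v - Y ω) 0 ∂μ| ≤ 1 := by
  have hb : ∀ ω, |max (u - X ω) 0 * max (v - Y ω) 0| ≤ 1 := fun ω => by
    rw [abs_mul]
    have h1 : |max (u - X ω) 0| ≤ 1 := by
      rw [abs_of_nonneg (le_max_right _ _)]
      exact max_le (by linarith [(hX01 ω).1]) zero_le_one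
    have h2 : |max (v - Y ω) 0| ≤ 1 := by
      rw [abs_of_nonneg (le_max_right _ _)]
      exact max_le (by linarith [(hY01 ω).1]) zero_le_one
    calc |max (u - X ω) 0| * |max (v - Y ω) 0| ≤ 1 * 1 :=
          mul_le_mul h1 h2 (abs_nonneg _) zero_le_one
      _ = 1 := mul_one _
  have h0 : ‖∫ ω, max (u - X ω) 0 * max (v - Y ω) 0 ∂μ‖
      ≤ ∫ ω, ‖max (u - X ω) 0 * max (v - Y ω) 0‖ ∂μ :=
    MeasureTheory.norm_integral_le_integral_norm _
  simp only [Real.norm_eq_abs] at h0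
  calc |∫ ω, max (u - X ω) 0 * max (v - Y ω) 0 ∂μ|
      ≤ ∫ ω, |max (u - X ω) 0 * max (v - Y ω) 0| ∂μ := h0
    _ ≤ ∫ _, (1:ℝ) ∂μ := by
        refine integral_mono ?_ (integrable_const 1) (fun ω => hb ω)
        exact integrable_of_bounded_fin
          ((((measurable_const.sub hX).max measurable_const).mul
            ((measurable_const.sub hY).max measurable_const)).abs).aestronglyMeasurable
          (fun ω => by rw [abs_abs]; exact hb ω)
    _ = 1 := by simp

end KHelpers

section SignId
variable {φ : ℝ → ℝ → ℝ} {U : Set (ℝ × ℝ)}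

lemma id_Dy (hU : IsOpen U) (hΦ : ContDiffOn ℝ 4 (fun q : ℝ × ℝ => φ q.1 q.2) U)
    {x t : ℝ} (hq : (x, t) ∈ U) :
    deriv (fun y => φ x y) t = DDy (fun q : ℝ × ℝ => φ q.1 q.2) (x, t) :=
  (hasDerivAt_slice_y hΦ hU (by norm_num) hq).deriv

lemma id_Dyy (hU : IsOpen U) (hΦ : ContDiffOn ℝ 4 (fun q : ℝ × ℝ => φ q.1 q.2) U)
    {x t : ℝ} (hq : (x, t) ∈ U) :
    iteratedDeriv 2 (fun y => φ x y) t
      = DDy (DDy (fun q : ℝ × ℝ => φ q.1 q.2)) (x, t) := by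
  have hΦ2 : ContDiffOn ℝ 3 (DDy fun q : ℝ × ℝ => φ q.1 q.2) U :=
    DDy_contDiffOn hΦ hU (by norm_num)
  refine iteratedDeriv_two_eq (hU.preimage (Continuous.prodMk_right x)) hq
    (g1 := fun z => DDy (fun q : ℝ × ℝ => φ q.1 q.2) (x, z))
    (fun z hz => hasDerivAt_slice_y hΦ hU (by norm_num) hz) ?_
  exact hasDerivAt_slice_y hΦ2 hU (by norm_num) hq

lemma id_Dxx (hU : IsOpen U) (hΦ : ContDiffOn ℝ 4 (fun q : ℝ × ℝ => φ q.1 q.2) U)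
    {x t : ℝ} (hq : (x, t) ∈ U) :
    iteratedDeriv 2 (fun z => φ z t) x
      = DDx (DDx (fun q : ℝ × ℝ => φ q.1 q.2)) (x, t) := by
  have hΦ1 : ContDiffOn ℝ 3 (DDx fun q : ℝ × ℝ => φ q.1 q.2) U :=
    DDx_contDiffOn hΦ hU (by norm_num)
  refine iteratedDeriv_two_eq (hU.preimage (Continuous.prodMk_left t)) hq
    (g1 := fun z => DDx (fun q : ℝ × ℝ => φ q.1 q.2) (z, t))
    (fun z hz => hasDerivAt_slice_x hΦ hU (by norm_num) hz) ?_
  exact hasDerivAt_slice_x hΦ1 hU (by norm_num) hq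

lemma id_Dxy (hU : IsOpen U) (hΦ : ContDiffOn ℝ 4 (fun q : ℝ × ℝ => φ q.1 q.2) U)
    {x t : ℝ} (hq : (x, t) ∈ U) :
    deriv (fun z => deriv (fun y => φ z y) t) x
      = DDx (DDy (fun q : ℝ × ℝ => φ q.1 q.2)) (x, t) := by
  have hΦ2 : ContDiffOn ℝ 3 (DDy fun q : ℝ × ℝ => φ q.1 q.2) U :=
    DDy_contDiffOn hΦ hU (by norm_num)
  have heq : ∀ z ∈ {s : ℝ | (s, t) ∈ U},
      deriv (fun y => φ z y) t = DDy (fun q : ℝ × ℝ => φ q.1 q.2) (z, t) :=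
    fun z hz => id_Dy hU hΦ hz
  rw [deriv_eq_on_open (hU.preimage (Continuous.prodMk_left t)) hq heq]
  exact (hasDerivAt_slice_x hΦ2 hU (by norm_num) hq).deriv

lemma id_Dxxy (hU : IsOpen U) (hΦ : ContDiffOn ℝ 4 (fun q : ℝ × ℝ => φ q.1 q.2) U)
    {x t : ℝ} (hq : (x, t) ∈ U) :
    iteratedDeriv 2 (fun z => deriv (fun y => φ z y) t) x
      = DDx (DDx (DDy (fun q : ℝ × ℝ => φ q.1 q.2))) (x, t) := by
  have hΦ2 : ContDiffOn ℝ 3 (DDy fun q : ℝ × ℝ => φ q.1 q.2) U :=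
    DDy_contDiffOn hΦ hU (by norm_num)
  have hΦ12 : ContDiffOn ℝ 2 (DDx (DDy fun q : ℝ × ℝ => φ q.1 q.2)) U :=
    DDx_contDiffOn hΦ2 hU (by norm_num)
  have heq : ∀ z ∈ {s : ℝ | (s, t) ∈ U},
      deriv (fun y => φ z y) t = DDy (fun q : ℝ × ℝ => φ q.1 q.2) (z, t) :=
    fun z hz => id_Dy hU hΦ hz
  rw [iteratedDeriv_two_congr (hU.preimage (Continuous.prodMk_left t)) hq heq]
  refine iteratedDeriv_two_eq (hU.preimage (Continuous.prodMk_left t)) hq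
    (g1 := fun z => DDx (DDy (fun q : ℝ × ℝ => φ q.1 q.2)) (z, t))
    (fun z hz => hasDerivAt_slice_x hΦ2 hU (by norm_num) hz) ?_
  exact hasDerivAt_slice_x hΦ12 hU (by norm_num) hq

lemma id_Dxyy (hU : IsOpen U) (hΦ : ContDiffOn ℝ 4 (fun q : ℝ × ℝ => φ q.1 q.2) U)
    {x t : ℝ} (hq : (x, t) ∈ U) :
    deriv (fun z => iteratedDeriv 2 (fun y => φ z y) t) x
      = DDx (DDy (DDy (fun q : ℝ × ℝ => φ q.1 q.2))) (x, t) := by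
  have hΦ2 : ContDiffOn ℝ 3 (DDy fun q : ℝ × ℝ => φ q.1 q.2) U :=
    DDy_contDiffOn hΦ hU (by norm_num)
  have hΦ22 : ContDiffOn ℝ 2 (DDy (DDy fun q : ℝ × ℝ => φ q.1 q.2)) U :=
    DDy_contDiffOn hΦ2 hU (by norm_num)
  have heq : ∀ z ∈ {s : ℝ | (s, t) ∈ U},
      iteratedDeriv 2 (fun y => φ z y) t
        = DDy (DDy (fun q : ℝ × ℝ => φ q.1 q.2)) (z, t) :=
    fun z hz => id_Dyy hU hΦ hz
  rw [deriv_eq_on_open (hU.preimage (Continuous.prodMk_left t)) hq heq]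
  exact (hasDerivAt_slice_x hΦ22 hU (by norm_num) hq).deriv

lemma id_Dxxyy (hU : IsOpen U) (hΦ : ContDiffOn ℝ 4 (fun q : ℝ × ℝ => φ q.1 q.2) U)
    {x t : ℝ} (hq : (x, t) ∈ U) :
    iteratedDeriv 2 (fun z => iteratedDeriv 2 (fun y => φ z y) t) x
      = DDx (DDx (DDy (DDy (fun q : ℝ × ℝ => φ q.1 q.2)))) (x, t) := by
  have hΦ2 : ContDiffOn ℝ 3 (DDy fun q : ℝ × ℝ => φ q.1 q.2) U :=
    DDy_contDiffOn hΦ hU (by norm_num)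
  have hΦ22 : ContDiffOn ℝ 2 (DDy (DDy fun q : ℝ × ℝ => φ q.1 q.2)) U :=
    DDy_contDiffOn hΦ2 hU (by norm_num)
  have hΦ122 : ContDiffOn ℝ 1 (DDx (DDy (DDy fun q : ℝ × ℝ => φ q.1 q.2))) U :=
    DDx_contDiffOn hΦ22 hU (by norm_num)
  have heq : ∀ z ∈ {s : ℝ | (s, t) ∈ U},
      iteratedDeriv 2 (fun y => φ z y) t
        = DDy (DDy (fun q : ℝ × ℝ => φ q.1 q.2)) (z, t) :=
    fun z hz => id_Dyy hU hΦ hz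
  rw [iteratedDeriv_two_congr (hU.preimage (Continuous.prodMk_left t)) hq heq]
  refine iteratedDeriv_two_eq (hU.preimage (Continuous.prodMk_left t)) hq
    (g1 := fun z => DDx (DDy (DDy (fun q : ℝ × ℝ => φ q.1 q.2))) (z, t))
    (fun z hz => hasDerivAt_slice_x hΦ22 hU (by norm_num) hz) ?_
  exact hasDerivAt_slice_x hΦ122 hU (by norm_num) hq

end SignId

/-- **Second order bivariate stochastic dominance over the class `Φ⁻⁻`.**
`(X₁,Y₁)` and `(X₂,Y₂)` are random vectors with values in the unit square with
cdfs `F₁`, `F₂` and marginals `Fᵢ^X(x) = Fᵢ(x,1)`, `Fᵢ^Y(y) = Fᵢ(1,y)`.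
If `H₁ ≤ H₂`, `H₁^X ≤ H₂^X` and `H₁^Y ≤ H₂^Y` on the unit square, where
`Hᵢ(x,y) = ∫₀ˣ∫₀ʸ Fᵢ(s,t) dt ds`, `Hᵢ^X(x) = ∫₀ˣ Fᵢ^X(s) ds`,
`Hᵢ^Y(y) = ∫₀ʸ Fᵢ^Y(t) dt`, then `E[φ(X₁,Y₁)] ≥ E[φ(X₂,Y₂)]` for every
`φ` in the class `Φ⁻⁻`: `C⁴` on an open connected set `Ω ⊇ [0,1]²`,
increasing in each argument, and satisfying on `Ω` the sign conditions
`∂²φ/∂x∂y ≤ 0`, `∂²φ/∂x² ≤ 0`, `∂²φ/∂y² ≤ 0`, `∂³φ/∂x²∂y ≥ 0`,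
`∂³φ/∂x∂y² ≥ 0`, `∂⁴φ/∂x²∂y² ≤ 0`. -/
theorem second_order_bivariate_SD_submodular
    {α : Type*} [MeasurableSpace α] (ℙ : Measure α) [IsProbabilityMeasure ℙ]
    (V W : α → ℝ × ℝ) (hV : Measurable V) (hW : Measurable W)
    (hVr : ∀ ω, V ω ∈ Icc (0:ℝ) 1 ×ˢ Icc (0:ℝ) 1)
    (hWr : ∀ ω, W ω ∈ Icc (0:ℝ) 1 ×ˢ Icc (0:ℝ) 1)
    (F₁ F₂ : ℝ → ℝ → ℝ)
    (hF₁ : ∀ s t : ℝ, F₁ s t = (ℙ {ω | (V ω).1 ≤ s ∧ (V ω).2 ≤ t}).toReal)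
    (hF₂ : ∀ s t : ℝ, F₂ s t = (ℙ {ω | (W ω).1 ≤ s ∧ (W ω).2 ≤ t}).toReal)
    (hdomH : ∀ x ∈ Icc (0:ℝ) 1, ∀ y ∈ Icc (0:ℝ) 1,
      (∫ s in (0:ℝ)..x, ∫ t in (0:ℝ)..y, F₁ s t) ≤
        ∫ s in (0:ℝ)..x, ∫ t in (0:ℝ)..y, F₂ s t)
    (hdomHX : ∀ x ∈ Icc (0:ℝ) 1,
      (∫ s in (0:ℝ)..x, F₁ s 1) ≤ ∫ s in (0:ℝ)..x, F₂ s 1)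
    (hdomHY : ∀ y ∈ Icc (0:ℝ) 1,
      (∫ t in (0:ℝ)..y, F₁ 1 t) ≤ ∫ t in (0:ℝ)..y, F₂ 1 t) :
    ∀ φ : ℝ → ℝ → ℝ,
      (∃ U : Set (ℝ × ℝ), IsOpen U ∧ IsConnected U ∧
          Icc (0:ℝ) 1 ×ˢ Icc (0:ℝ) 1 ⊆ U ∧
          ContDiffOn ℝ 4 (fun q : ℝ × ℝ => φ q.1 q.2) U ∧
          -- ∂²φ/∂x∂y ≤ 0 on Ω (submodularity)
          (∀ q ∈ U, deriv (fun x => deriv (fun y => φ x y) q.2) q.1 ≤ 0) ∧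
          -- ∂²φ/∂x² ≤ 0 on Ω
          (∀ q ∈ U, iteratedDeriv 2 (fun x => φ x q.2) q.1 ≤ 0) ∧
          -- ∂²φ/∂y² ≤ 0 on Ω
          (∀ q ∈ U, iteratedDeriv 2 (fun y => φ q.1 y) q.2 ≤ 0) ∧
          -- ∂³φ/∂x²∂y ≥ 0 on Ω
          (∀ q ∈ U, 0 ≤ iteratedDeriv 2 (fun x => deriv (fun y => φ x y) q.2) q.1) ∧
          -- ∂³φ/∂x∂y² ≥ 0 on Ω
          (∀ q ∈ U, 0 ≤ deriv (fun x => iteratedDeriv 2 (fun y => φ x y) q.2) q.1) ∧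
          -- ∂⁴φ/∂x²∂y² ≤ 0 on Ω
          (∀ q ∈ U,
            iteratedDeriv 2 (fun x => iteratedDeriv 2 (fun y => φ x y) q.2) q.1 ≤ 0)) →
      (∀ y : ℝ, Monotone fun x => φ x y) →
      (∀ x : ℝ, Monotone fun y => φ x y) →
      ∫ ω, φ (W ω).1 (W ω).2 ∂ℙ ≤ ∫ ω, φ (V ω).1 (V ω).2 ∂ℙ := by
  rintro φ ⟨U, hU, _hconn, hsubU, hC4, h12s, h11s, h22s, h112s, h122s, h1122s⟩ hmx hmy
  set P : ℝ × ℝ → ℝ := fun q : ℝ × ℝ => φ q.1 q.2 with hPdef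
  have I1 : (1:ℝ) ∈ Icc (0:ℝ) 1 := by norm_num
  have hq : ∀ {a b : ℝ}, a ∈ Icc (0:ℝ) 1 → b ∈ Icc (0:ℝ) 1 → (a, b) ∈ U :=
    fun ha hb => hsubU (mk_mem_prod ha hb)
  -- measurability / range of the coordinates
  have hVx := hV.fst
  have hVy := hV.snd
  have hWx := hW.fst
  have hWy := hW.snd
  have hVx01 : ∀ ω, (V ω).1 ∈ Icc (0:ℝ) 1 := fun ω => (hVr ω).1
  have hVy01 : ∀ ω, (V ω).2 ∈ Icc (0:ℝ) 1 := fun ω => (hVr ω).2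
  have hWx01 : ∀ ω, (W ω).1 ∈ Icc (0:ℝ) 1 := fun ω => (hWr ω).1
  have hWy01 : ∀ ω, (W ω).2 ∈ Icc (0:ℝ) 1 := fun ω => (hWr ω).2
  -- smoothness chain
  have hΦ2 : ContDiffOn ℝ 3 (DDy P) U := DDy_contDiffOn hC4 hU (by norm_num)
  have hΦ22 : ContDiffOn ℝ 2 (DDy (DDy P)) U := DDy_contDiffOn hΦ2 hU (by norm_num)
  have hΦ122 : ContDiffOn ℝ 1 (DDx (DDy (DDy P))) U := DDx_contDiffOn hΦ22 hU (by norm_num)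
  have hΦ1122 : ContDiffOn ℝ 0 (DDx (DDx (DDy (DDy P)))) U :=
    DDx_contDiffOn hΦ122 hU (by norm_num)
  have hΦ12 : ContDiffOn ℝ 2 (DDx (DDy P)) U := DDx_contDiffOn hΦ2 hU (by norm_num)
  have hΦ112 : ContDiffOn ℝ 1 (DDx (DDx (DDy P))) U := DDx_contDiffOn hΦ12 hU (by norm_num)
  have hΦ1 : ContDiffOn ℝ 3 (DDx P) U := DDx_contDiffOn hC4 hU (by norm_num)
  have hΦ11 : ContDiffOn ℝ 2 (DDx (DDx P)) U := DDx_contDiffOn hΦ1 hU (by norm_num)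
  -- bounds
  have bnd : ∀ g : ℝ × ℝ → ℝ, ContinuousOn g U →
      ∃ M, ∀ q ∈ Icc (0:ℝ) 1 ×ˢ Icc (0:ℝ) 1, |g q| ≤ M := by
    intro g hg
    obtain ⟨M, hM⟩ := (isCompact_Icc.prod isCompact_Icc).exists_bound_of_continuousOn
      (hg.mono hsubU)
    exact ⟨M, fun q hq' => by simpa [Real.norm_eq_abs] using hM q hq'⟩
  obtain ⟨M11, hM11⟩ := bnd _ hΦ11.continuousOn
  obtain ⟨M112, hM112⟩ := bnd _ hΦ112.continuousOn
  obtain ⟨M22, hM22⟩ := bnd _ hΦ22.continuousOn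
  obtain ⟨M122, hM122⟩ := bnd _ hΦ122.continuousOn
  obtain ⟨M1122, hM1122⟩ := bnd _ hΦ1122.continuousOn
  -- coefficient measurability
  have hc11 : Measurable fun u : ℝ => DDx (DDx P) (u,1) :=
    (DDx_measurable _).comp (measurable_id.prodMk measurable_const)
  have hc112 : Measurable fun u : ℝ => DDx (DDx (DDy P)) (u,1) :=
    (DDx_measurable _).comp (measurable_id.prodMk measurable_const)
  have hc22 : Measurable fun v : ℝ => DDy (DDy P) (1,v) :=
    (DDy_measurable _).comp (measurable_const.prodMk measurable_id)
  have hc122 : Measurable fun v : ℝ => DDx (DDy (DDy P)) (1,v) :=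
    (DDx_measurable _).comp (measurable_const.prodMk measurable_id)
  have hc1122 : Measurable fun p : ℝ × ℝ => DDx (DDx (DDy (DDy P))) (p.1, p.2) :=
    (DDx_measurable _).comp (measurable_fst.prodMk measurable_snd)
  -- dominance of the kernels
  have dKX : ∀ u ∈ Icc (0:ℝ) 1,
      (∫ ω, max (u - (V ω).1) 0 ∂ℙ) ≤ ∫ ω, max (u - (W ω).1) 0 ∂ℙ := by
    intro u hu
    rw [← KX_eq hVx hVy hVx01 hVy01 hF₁ hu, ← KX_eq hWx hWy hWx01 hWy01 hF₂ hu]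
    exact hdomHX u hu
  have dKY : ∀ v ∈ Icc (0:ℝ) 1,
      (∫ ω, max (v - (V ω).2) 0 ∂ℙ) ≤ ∫ ω, max (v - (W ω).2) 0 ∂ℙ := by
    intro v hv
    rw [← KY_eq hVx hVy hVx01 hVy01 hF₁ hv, ← KY_eq hWx hWy hWx01 hWy01 hF₂ hv]
    exact hdomHY v hv
  have dKK : ∀ u ∈ Icc (0:ℝ) 1, ∀ v ∈ Icc (0:ℝ) 1,
      (∫ ω, max (u - (V ω).1) 0 * max (v - (V ω).2) 0 ∂ℙ)
        ≤ ∫ ω, max (u - (W ω).1) 0 * max (v - (W ω).2) 0 ∂ℙ := by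
    intro u hu v hv
    rw [← K_eq hVx hVy hVx01 hVy01 hF₁ hu hv, ← K_eq hWx hWy hWx01 hWy01 hF₂ hu hv]
    exact hdomH u hu v hv
  -- signs
  have s1 : 0 ≤ DDx P (1,1) :=
    monotone_deriv_nonneg (hmx 1) (hasDerivAt_slice_x hC4 hU (by norm_num) (hq I1 I1))
  have s2 : 0 ≤ DDy P (1,1) :=
    monotone_deriv_nonneg (hmy 1) (hasDerivAt_slice_y hC4 hU (by norm_num) (hq I1 I1))
  have s12 : DDx (DDy P) (1,1) ≤ 0 := by
    have h := h12s (1,1) (hq I1 I1)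
    rw [id_Dxy hU hC4 (hq I1 I1)] at h
    exact h
  have s11 : ∀ u ∈ Icc (0:ℝ) 1, DDx (DDx P) (u,1) ≤ 0 := by
    intro u hu
    have h := h11s (u,1) (hq hu I1)
    rw [id_Dxx hU hC4 (hq hu I1)] at h
    exact h
  have s22 : ∀ v ∈ Icc (0:ℝ) 1, DDy (DDy P) (1,v) ≤ 0 := by
    intro v hv
    have h := h22s (1,v) (hq I1 hv)
    rw [id_Dyy hU hC4 (hq I1 hv)] at h
    exact h
  have s112 : ∀ u ∈ Icc (0:ℝ) 1, 0 ≤ DDx (DDx (DDy P)) (u,1) := by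
    intro u hu
    have h := h112s (u,1) (hq hu I1)
    rw [id_Dxxy hU hC4 (hq hu I1)] at h
    exact h
  have s122 : ∀ v ∈ Icc (0:ℝ) 1, 0 ≤ DDx (DDy (DDy P)) (1,v) := by
    intro v hv
    have h := h122s (1,v) (hq I1 hv)
    rw [id_Dxyy hU hC4 (hq I1 hv)] at h
    exact h
  have s1122 : ∀ u ∈ Icc (0:ℝ) 1, ∀ v ∈ Icc (0:ℝ) 1,
      DDx (DDx (DDy (DDy P))) (u,v) ≤ 0 := by
    intro u hu v hv
    have h := h1122s (u,v) (hq hu hv)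
    rw [id_Dxxyy hU hC4 (hq hu hv)] at h
    exact h
  -- term comparisons
  have tB : DDx P (1,1) * (∫ ω, max (1 - (V ω).1) 0 ∂ℙ)
      ≤ DDx P (1,1) * (∫ ω, max (1 - (W ω).1) 0 ∂ℙ) :=
    mul_le_mul_of_nonneg_left (dKX 1 I1) s1
  have tD : DDy P (1,1) * (∫ ω, max (1 - (V ω).2) 0 ∂ℙ)
      ≤ DDy P (1,1) * (∫ ω, max (1 - (W ω).2) 0 ∂ℙ) :=
    mul_le_mul_of_nonneg_left (dKY 1 I1) s2
  have tE : DDx (DDy P) (1,1) * (∫ ω, max (1 - (W ω).1) 0 * max (1 - (W ω).2) 0 ∂ℙ)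
      ≤ DDx (DDy P) (1,1) * (∫ ω, max (1 - (V ω).1) 0 * max (1 - (V ω).2) 0 ∂ℙ) :=
    mul_le_mul_of_nonpos_left (dKK 1 I1 1 I1) s12
  -- integrability of the 1d comparison integrands
  have hIoc : uIoc (0:ℝ) 1 = Ioc (0:ℝ) 1 := uIoc_of_le zero_le_one
  have mkIcc : ∀ {u : ℝ}, u ∈ uIoc (0:ℝ) 1 → u ∈ Icc (0:ℝ) 1 := by
    intro u hu; rw [hIoc] at hu; exact ⟨le_of_lt hu.1, hu.2⟩
  have int1 : ∀ (Z : α → ℝ × ℝ), Measurable Z → (∀ ω, Z ω ∈ Icc (0:ℝ) 1 ×ˢ Icc (0:ℝ) 1) →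
      ∀ (c : ℝ → ℝ) (M : ℝ), Measurable c → (∀ u ∈ Icc (0:ℝ) 1, |c u| ≤ M) →
      IntervalIntegrable (fun u => c u * ∫ ω, max (u - (Z ω).1) 0 ∂ℙ) volume 0 1 := by
    intro Z hZ hZr c M hc hM
    refine intervalIntegrable_of_bounded
      ((hc.mul (K1_SM (μ := ℙ) hZ.fst).measurable).aestronglyMeasurable) (M := M * 1) ?_
    intro u hu
    rw [abs_mul]
    have h1 := hM u (mkIcc hu)
    exact mul_le_mul h1 (K1_bd hZ.fst (fun ω => (hZr ω).1) (mkIcc hu).2) (abs_nonneg _)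
      (le_trans (abs_nonneg _) h1)
  have int1y : ∀ (Z : α → ℝ × ℝ), Measurable Z → (∀ ω, Z ω ∈ Icc (0:ℝ) 1 ×ˢ Icc (0:ℝ) 1) →
      ∀ (c : ℝ → ℝ) (M : ℝ), Measurable c → (∀ v ∈ Icc (0:ℝ) 1, |c v| ≤ M) →
      IntervalIntegrable (fun v => c v * ∫ ω, max (v - (Z ω).2) 0 ∂ℙ) volume 0 1 := by
    intro Z hZ hZr c M hc hM
    refine intervalIntegrable_of_bounded
      ((hc.mul (K1_SM (μ := ℙ) hZ.snd).measurable).aestronglyMeasurable) (M := M * 1) ?_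
    intro v hv
    rw [abs_mul]
    have h1 := hM v (mkIcc hv)
    exact mul_le_mul h1 (K1_bd hZ.snd (fun ω => (hZr ω).2) (mkIcc hv).2) (abs_nonneg _)
      (le_trans (abs_nonneg _) h1)
  have int1xy : ∀ (Z : α → ℝ × ℝ), Measurable Z → (∀ ω, Z ω ∈ Icc (0:ℝ) 1 ×ˢ Icc (0:ℝ) 1) →
      ∀ (c : ℝ → ℝ) (M : ℝ), Measurable c → (∀ u ∈ Icc (0:ℝ) 1, |c u| ≤ M) →
      IntervalIntegrable
        (fun u => c u * ∫ ω, max (u - (Z ω).1) 0 * max (1 - (Z ω).2) 0 ∂ℙ) volume 0 1 := by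
    intro Z hZ hZr c M hc hM
    have hsm : Measurable fun u : ℝ => ∫ ω, max (u - (Z ω).1) 0 * max (1 - (Z ω).2) 0 ∂ℙ := by
      have := (K2_SM (μ := ℙ) hZ.fst hZ.snd).measurable
      exact this.comp (measurable_id.prodMk measurable_const)
    refine intervalIntegrable_of_bounded ((hc.mul hsm).aestronglyMeasurable) (M := M * 1) ?_
    intro u hu
    rw [abs_mul]
    have h1 := hM u (mkIcc hu)
    have h2 : |∫ ω, max (u - (Z ω).1) 0 * max (1 - (Z ω).2) 0 ∂ℙ| ≤ 1 :=
      K2_bd hZ.fst hZ.snd (fun ω => (hZr ω).1) (fun ω => (hZr ω).2) (mkIcc hu).2 le_rfl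
    exact mul_le_mul h1 h2 (abs_nonneg _) (le_trans (abs_nonneg _) h1)
  have int1yx : ∀ (Z : α → ℝ × ℝ), Measurable Z → (∀ ω, Z ω ∈ Icc (0:ℝ) 1 ×ˢ Icc (0:ℝ) 1) →
      ∀ (c : ℝ → ℝ) (M : ℝ), Measurable c → (∀ v ∈ Icc (0:ℝ) 1, |c v| ≤ M) →
      IntervalIntegrable
        (fun v => c v * ∫ ω, max (1 - (Z ω).1) 0 * max (v - (Z ω).2) 0 ∂ℙ) volume 0 1 := by
    intro Z hZ hZr c M hc hM
    have hsm : Measurable fun v : ℝ => ∫ ω, max (1 - (Z ω).1) 0 * max (v - (Z ω).2) 0 ∂ℙ := by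
      have := (K2_SM (μ := ℙ) hZ.fst hZ.snd).measurable
      exact this.comp (measurable_const.prodMk measurable_id)
    refine intervalIntegrable_of_bounded ((hc.mul hsm).aestronglyMeasurable) (M := M * 1) ?_
    intro v hv
    rw [abs_mul]
    have h1 := hM v (mkIcc hv)
    have h2 : |∫ ω, max (1 - (Z ω).1) 0 * max (v - (Z ω).2) 0 ∂ℙ| ≤ 1 :=
      K2_bd hZ.fst hZ.snd (fun ω => (hZr ω).1) (fun ω => (hZr ω).2) le_rfl (mkIcc hv).2
    exact mul_le_mul h1 h2 (abs_nonneg _) (le_trans (abs_nonneg _) h1)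
  have hc11bd : ∀ u ∈ Icc (0:ℝ) 1, |DDx (DDx P) (u,1)| ≤ M11 :=
    fun u hu => hM11 _ (mk_mem_prod hu I1)
  have hc112bd : ∀ u ∈ Icc (0:ℝ) 1, |DDx (DDx (DDy P)) (u,1)| ≤ M112 :=
    fun u hu => hM112 _ (mk_mem_prod hu I1)
  have hc22bd : ∀ v ∈ Icc (0:ℝ) 1, |DDy (DDy P) (1,v)| ≤ M22 :=
    fun v hv => hM22 _ (mk_mem_prod I1 hv)
  have hc122bd : ∀ v ∈ Icc (0:ℝ) 1, |DDx (DDy (DDy P)) (1,v)| ≤ M122 :=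
    fun v hv => hM122 _ (mk_mem_prod I1 hv)
  -- term C
  have tC : (∫ u in (0:ℝ)..1, DDx (DDx P) (u,1) * ∫ ω, max (u - (W ω).1) 0 ∂ℙ)
      ≤ ∫ u in (0:ℝ)..1, DDx (DDx P) (u,1) * ∫ ω, max (u - (V ω).1) 0 ∂ℙ := by
    refine intervalIntegral.integral_mono_on zero_le_one
      (int1 W hW hWr _ M11 hc11 hc11bd) (int1 V hV hVr _ M11 hc11 hc11bd) ?_
    intro u hu
    exact mul_le_mul_of_nonpos_left (dKX u hu) (s11 u hu)
  -- term F
  have tF : (∫ u in (0:ℝ)..1, DDx (DDx (DDy P)) (u,1)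
        * ∫ ω, max (u - (V ω).1) 0 * max (1 - (V ω).2) 0 ∂ℙ)
      ≤ ∫ u in (0:ℝ)..1, DDx (DDx (DDy P)) (u,1)
        * ∫ ω, max (u - (W ω).1) 0 * max (1 - (W ω).2) 0 ∂ℙ := by
    refine intervalIntegral.integral_mono_on zero_le_one
      (int1xy V hV hVr _ M112 hc112 hc112bd) (int1xy W hW hWr _ M112 hc112 hc112bd) ?_
    intro u hu
    exact mul_le_mul_of_nonneg_left (dKK u hu 1 I1) (s112 u hu)
  -- term G
  have tG : (∫ v in (0:ℝ)..1, DDy (DDy P) (1,v) * ∫ ω, max (v - (W ω).2) 0 ∂ℙ)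
      ≤ ∫ v in (0:ℝ)..1, DDy (DDy P) (1,v) * ∫ ω, max (v - (V ω).2) 0 ∂ℙ := by
    refine intervalIntegral.integral_mono_on zero_le_one
      (int1y W hW hWr _ M22 hc22 hc22bd) (int1y V hV hVr _ M22 hc22 hc22bd) ?_
    intro v hv
    exact mul_le_mul_of_nonpos_left (dKY v hv) (s22 v hv)
  -- term H
  have tH : (∫ v in (0:ℝ)..1, DDx (DDy (DDy P)) (1,v)
        * ∫ ω, max (1 - (V ω).1) 0 * max (v - (V ω).2) 0 ∂ℙ)
      ≤ ∫ v in (0:ℝ)..1, DDx (DDy (DDy P)) (1,v)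
        * ∫ ω, max (1 - (W ω).1) 0 * max (v - (W ω).2) 0 ∂ℙ := by
    refine intervalIntegral.integral_mono_on zero_le_one
      (int1yx V hV hVr _ M122 hc122 hc122bd) (int1yx W hW hWr _ M122 hc122 hc122bd) ?_
    intro v hv
    exact mul_le_mul_of_nonneg_left (dKK 1 I1 v hv) (s122 v hv)
  -- term I (double integral)
  have intI : ∀ (Z : α → ℝ × ℝ), Measurable Z → (∀ ω, Z ω ∈ Icc (0:ℝ) 1 ×ˢ Icc (0:ℝ) 1) →
      IntervalIntegrable (fun v => ∫ u in (0:ℝ)..1, DDx (DDx (DDy (DDy P))) (u,v)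
        * ∫ ω, max (u - (Z ω).1) 0 * max (v - (Z ω).2) 0 ∂ℙ) volume 0 1 := by
    intro Z hZ hZr
    have hsm : AEStronglyMeasurable (fun v => ∫ u in (0:ℝ)..1, DDx (DDx (DDy (DDy P))) (u,v)
        * ∫ ω, max (u - (Z ω).1) 0 * max (v - (Z ω).2) 0 ∂ℙ) volume := by
      have hrw : (fun v => ∫ u in (0:ℝ)..1, DDx (DDx (DDy (DDy P))) (u,v)
          * ∫ ω, max (u - (Z ω).1) 0 * max (v - (Z ω).2) 0 ∂ℙ)
          = fun v => ∫ u, DDx (DDx (DDy (DDy P))) (u,v)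
            * (∫ ω, max (u - (Z ω).1) 0 * max (v - (Z ω).2) 0 ∂ℙ)
              ∂(volume.restrict (Ioc 0 1)) := by
        funext v; exact integral_of_le zero_le_one
      rw [hrw]
      have hm : Measurable fun p : ℝ × ℝ => DDx (DDx (DDy (DDy P))) (p.2, p.1)
          * ∫ ω, max (p.2 - (Z ω).1) 0 * max (p.1 - (Z ω).2) 0 ∂ℙ := by
        refine Measurable.mul ((DDx_measurable _).comp (measurable_snd.prodMk measurable_fst)) ?_
        exact (K2_SM (μ := ℙ) hZ.fst hZ.snd).measurable.comp
          (measurable_snd.prodMk measurable_fst)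
      exact (hm.stronglyMeasurable.integral_prod_right').aestronglyMeasurable
    refine intervalIntegrable_of_bounded hsm (M := M1122 * 1) ?_
    intro v hv
    have hv' := mkIcc hv
    have hb := intervalIntegral.norm_integral_le_of_norm_le_const (C := M1122 * 1)
      (f := fun u => DDx (DDx (DDy (DDy P))) (u,v)
        * ∫ ω, max (u - (Z ω).1) 0 * max (v - (Z ω).2) 0 ∂ℙ) (a := (0:ℝ)) (b := 1) ?_
    · simpa [Real.norm_eq_abs] using hb
    · intro u hu
      have hu' := mkIcc hu
      rw [Real.norm_eq_abs, abs_mul]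
      have h1 := hM1122 (u,v) (mk_mem_prod hu' hv')
      have h2 : |∫ ω, max (u - (Z ω).1) 0 * max (v - (Z ω).2) 0 ∂ℙ| ≤ 1 :=
        K2_bd hZ.fst hZ.snd (fun ω => (hZr ω).1) (fun ω => (hZr ω).2) hu'.2 hv'.2
      exact mul_le_mul h1 h2 (abs_nonneg _) (le_trans (abs_nonneg _) h1)
  have intIu : ∀ (Z : α → ℝ × ℝ), Measurable Z → (∀ ω, Z ω ∈ Icc (0:ℝ) 1 ×ˢ Icc (0:ℝ) 1) →
      ∀ v ∈ Icc (0:ℝ) 1,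
      IntervalIntegrable (fun u => DDx (DDx (DDy (DDy P))) (u,v)
        * ∫ ω, max (u - (Z ω).1) 0 * max (v - (Z ω).2) 0 ∂ℙ) volume 0 1 := by
    intro Z hZ hZr v hv
    have hsm : Measurable fun u : ℝ =>
        ∫ ω, max (u - (Z ω).1) 0 * max (v - (Z ω).2) 0 ∂ℙ :=
      (K2_SM (μ := ℙ) hZ.fst hZ.snd).measurable.comp (measurable_id.prodMk measurable_const)
    have hcm : Measurable fun u : ℝ => DDx (DDx (DDy (DDy P))) (u,v) :=
      (DDx_measurable _).comp (measurable_id.prodMk measurable_const)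
    refine intervalIntegrable_of_bounded ((hcm.mul hsm).aestronglyMeasurable)
      (M := M1122 * 1) ?_
    intro u hu
    have hu' := mkIcc hu
    rw [abs_mul]
    have h1 := hM1122 (u,v) (mk_mem_prod hu' hv)
    have h2 : |∫ ω, max (u - (Z ω).1) 0 * max (v - (Z ω).2) 0 ∂ℙ| ≤ 1 :=
      K2_bd hZ.fst hZ.snd (fun ω => (hZr ω).1) (fun ω => (hZr ω).2) hu'.2 hv.2
    exact mul_le_mul h1 h2 (abs_nonneg _) (le_trans (abs_nonneg _) h1)
  have tI : (∫ v in (0:ℝ)..1, ∫ u in (0:ℝ)..1, DDx (DDx (DDy (DDy P))) (u,v)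
        * ∫ ω, max (u - (W ω).1) 0 * max (v - (W ω).2) 0 ∂ℙ)
      ≤ ∫ v in (0:ℝ)..1, ∫ u in (0:ℝ)..1, DDx (DDx (DDy (DDy P))) (u,v)
        * ∫ ω, max (u - (V ω).1) 0 * max (v - (V ω).2) 0 ∂ℙ := by
    refine intervalIntegral.integral_mono_on zero_le_one (intI W hW hWr) (intI V hV hVr) ?_
    intro v hv
    refine intervalIntegral.integral_mono_on zero_le_one
      (intIu W hW hWr v hv) (intIu V hV hVr v hv) ?_
    intro u hu
    exact mul_le_mul_of_nonpos_left (dKK u hu v hv) (s1122 u hu v hv)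
  -- assemble
  have eqV := expectation_formula (μ := ℙ) hU hsubU hC4 hVx hVy hVx01 hVy01
  have eqW := expectation_formula (μ := ℙ) hU hsubU hC4 hWx hWy hWx01 hWy01
  calc ∫ ω, φ (W ω).1 (W ω).2 ∂ℙ
      = P (1,1)
        - DDx P (1,1) * (∫ ω, max (1 - (W ω).1) 0 ∂ℙ)
        + (∫ u in (0:ℝ)..1, DDx (DDx P) (u,1) * ∫ ω, max (u - (W ω).1) 0 ∂ℙ)
        - DDy P (1,1) * (∫ ω, max (1 - (W ω).2) 0 ∂ℙ)
        + DDx (DDy P) (1,1) * (∫ ω, max (1 - (W ω).1) 0 * max (1 - (W ω).2) 0 ∂ℙ)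
        - (∫ u in (0:ℝ)..1, DDx (DDx (DDy P)) (u,1)
            * ∫ ω, max (u - (W ω).1) 0 * max (1 - (W ω).2) 0 ∂ℙ)
        + (∫ v in (0:ℝ)..1, DDy (DDy P) (1,v) * ∫ ω, max (v - (W ω).2) 0 ∂ℙ)
        - (∫ v in (0:ℝ)..1, DDx (DDy (DDy P)) (1,v)
            * ∫ ω, max (1 - (W ω).1) 0 * max (v - (W ω).2) 0 ∂ℙ)
        + ∫ v in (0:ℝ)..1, ∫ u in (0:ℝ)..1,
            DDx (DDx (DDy (DDy P))) (u,v)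
              * ∫ ω, max (u - (W ω).1) 0 * max (v - (W ω).2) 0 ∂ℙ := eqW
    _ ≤ P (1,1)
        - DDx P (1,1) * (∫ ω, max (1 - (V ω).1) 0 ∂ℙ)
        + (∫ u in (0:ℝ)..1, DDx (DDx P) (u,1) * ∫ ω, max (u - (V ω).1) 0 ∂ℙ)
        - DDy P (1,1) * (∫ ω, max (1 - (V ω).2) 0 ∂ℙ)
        + DDx (DDy P) (1,1) * (∫ ω, max (1 - (V ω).1) 0 * max (1 - (V ω).2) 0 ∂ℙ)
        - (∫ u in (0:ℝ)..1, DDx (DDx (DDy P)) (u,1)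
            * ∫ ω, max (u - (V ω).1) 0 * max (1 - (V ω).2) 0 ∂ℙ)
        + (∫ v in (0:ℝ)..1, DDy (DDy P) (1,v) * ∫ ω, max (v - (V ω).2) 0 ∂ℙ)
        - (∫ v in (0:ℝ)..1, DDx (DDy (DDy P)) (1,v)
            * ∫ ω, max (1 - (V ω).1) 0 * max (v - (V ω).2) 0 ∂ℙ)
        + ∫ v in (0:ℝ)..1, ∫ u in (0:ℝ)..1,
            DDx (DDx (DDy (DDy P))) (u,v)
              * ∫ ω, max (u - (V ω).1) 0 * max (v - (V ω).2) 0 ∂ℙ := by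
          linarith [tB, tC, tD, tE, tF, tG, tH, tI]
    _ = ∫ ω, φ (V ω).1 (V ω).2 ∂ℙ := eqV.symm
end
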